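/- arXiv:1802.09622 — 9 statements merged into one kernel-verified Lean document; each statement's English description precedes it below -/
import Mathlib

section
/- Let r, k, k' be integers with either (i) 2 ≤ r ≤ k ≤ k' ≤ n or (ii) 2 ≤ k' ≤ k ≤ r ≤ n. If an r-uniform hypergraph H on an n-element vertex set crosses all k-partitions of the vertex set, then H crosses all k'-partitions as well. Consequently, f(n,k,r) ≥ f(n,k',r). -/
open Finset

section Defs

variable {α : Type*} [Fintype α] [DecidableEq α]

/-- A set `H` crosses a partition `P` of the vertex set if it meets
exactly `min (|H|, number of classes)` classes. -/
def Crosses (H : Finset α) (P : Finpartition (univ : Finset α)) : Prop :=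
  (P.parts.filter fun c => (c ∩ H).Nonempty).card = min H.card P.parts.card

/-- A set system crosses a partition if at least one of its members does. -/
def SysCrosses (𝓗 : Finset (Finset α)) (P : Finpartition (univ : Finset α)) : Prop :=
  ∃ H ∈ 𝓗, Crosses H P

/-- `𝓗` crosses every partition of the vertex set into exactly `k` nonempty classes. -/
def CrossesAllPartitions (𝓗 : Finset (Finset α)) (k : ℕ) : Prop :=
  ∀ P : Finpartition (univ : Finset α), P.parts.card = k → SysCrosses 𝓗 P

/-- `f n k r`: the minimum number of edges in an `r`-uniform hypergraph on an
`n`-element vertex set crossing all `k`-partitions. -/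
noncomputable def f (n k r : ℕ) : ℕ :=
  sInf { m | ∃ 𝓗 : Finset (Finset (Fin n)),
    (∀ H ∈ 𝓗, H.card = r) ∧ CrossesAllPartitions 𝓗 k ∧ 𝓗.card = m }

end Defs

section Aux

variable {α : Type*} [Fintype α] [DecidableEq α]

lemma filter_meet_card_le (P : Finpartition (univ : Finset α)) (H : Finset α) :
    (P.parts.filter fun c => (c ∩ H).Nonempty).card ≤ H.card := by
  rcases H.eq_empty_or_nonempty with rfl | ⟨h0, hh0⟩
  · simp
  · apply Finset.card_le_card_of_injOn
      (fun c => if h : (c ∩ H).Nonempty then h.choose else h0)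
    · intro c hc
      rw [mem_coe, mem_filter] at hc
      beta_reduce
      rw [dif_pos hc.2]
      exact (Finset.mem_inter.1 hc.2.choose_spec).2
    · intro c hc c' hc' hcc'
      simp only [coe_filter, Set.mem_setOf_eq] at hc hc'
      have hcc2 : (if h : (c ∩ H).Nonempty then h.choose else h0) =
          (if h : (c' ∩ H).Nonempty then h.choose else h0) := hcc'
      rw [dif_pos hc.2, dif_pos hc'.2] at hcc2
      replace hcc' := hcc2
      exact P.eq_of_mem_parts hc.1 hc'.1 (Finset.mem_inter.1 hc.2.choose_spec).1
        (hcc' ▸ (Finset.mem_inter.1 hc'.2.choose_spec).1)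

lemma filter_meet_card_mono (P Q : Finpartition (univ : Finset α)) (H : Finset α)
    (hle : ∀ p ∈ P.parts, ∃ q ∈ Q.parts, p ⊆ q) :
    (Q.parts.filter fun c => (c ∩ H).Nonempty).card ≤
      (P.parts.filter fun c => (c ∩ H).Nonempty).card := by
  classical
  apply Finset.card_le_card_of_injOn
    (fun q => if h : (q ∩ H).Nonempty then
      (P.exists_mem (mem_univ h.choose)).choose else ∅)
  · intro q hq
    rw [mem_coe, mem_filter] at hq
    beta_reduce
    rw [dif_pos hq.2, mem_coe, mem_filter]
    obtain ⟨hmem, hx⟩ := (P.exists_mem (mem_univ hq.2.choose)).choose_spec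
    exact ⟨hmem, ⟨hq.2.choose, Finset.mem_inter.2 ⟨hx, (Finset.mem_inter.1 hq.2.choose_spec).2⟩⟩⟩
  · intro q hq q' hq' hqq'
    simp only [coe_filter, Set.mem_setOf_eq] at hq hq'
    have hqq2 : (if h : (q ∩ H).Nonempty then
        (P.exists_mem (mem_univ h.choose)).choose else ∅) =
        (if h : (q' ∩ H).Nonempty then
        (P.exists_mem (mem_univ h.choose)).choose else ∅) := hqq'
    rw [dif_pos hq.2, dif_pos hq'.2] at hqq2
    replace hqq' := hqq2
    set x := hq.2.choose with hxdef
    set x' := hq'.2.choose with hxdef'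
    obtain ⟨hmem, hx⟩ := (P.exists_mem (mem_univ x)).choose_spec
    obtain ⟨hmem', hx'⟩ := (P.exists_mem (mem_univ x')).choose_spec
    obtain ⟨c, hc, hsub⟩ := hle _ hmem
    have hxq : x ∈ q := (Finset.mem_inter.1 hq.2.choose_spec).1
    have hx'q' : x' ∈ q' := (Finset.mem_inter.1 hq'.2.choose_spec).1
    have h1 : q = c := Q.eq_of_mem_parts hq.1 hc hxq (hsub hx)
    have h2 : q' = c := Q.eq_of_mem_parts hq'.1 hc hx'q' (hsub (hqq' ▸ hx'))
    rw [h1, h2]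

lemma exists_coarsen (P : Finpartition (univ : Finset α)) (m : ℕ) (hm : 1 ≤ m)
    (hmc : m ≤ P.parts.card) :
    ∃ Q : Finpartition (univ : Finset α), Q.parts.card = m ∧
      ∀ p ∈ P.parts, ∃ q ∈ Q.parts, p ⊆ q := by
  obtain ⟨S, hS, hScard⟩ := Finset.exists_subset_card_eq
    (show m - 1 ≤ P.parts.card by omega)
  set T := P.parts \ S with hT
  set big := T.sup id with hbig
  have hTne : T.Nonempty := by
    rw [hT, sdiff_nonempty]
    intro hsub
    have := Finset.card_le_card hsub
    omega
  obtain ⟨t0, ht0⟩ := hTne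
  have ht0p : t0 ∈ P.parts := (Finset.mem_sdiff.1 ht0).1
  have hbigne : big.Nonempty :=
    (P.nonempty_of_mem_parts ht0p).mono (Finset.le_sup (f := id) ht0)
  have hdisjS : ∀ s ∈ S, Disjoint s big := by
    intro s hs
    rw [hbig, Finset.disjoint_sup_right]
    intro t ht
    exact P.disjoint (hS hs) (Finset.mem_sdiff.1 ht).1
      (fun h => (Finset.mem_sdiff.1 ht).2 (h ▸ hs))
  have hbigS : big ∉ S := by
    intro hmem
    exact hbigne.ne_empty (disjoint_self.1 (hdisjS _ hmem))
  refine ⟨⟨insert big S, ?_, ?_, ?_⟩, ?_, ?_⟩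
  · rw [Finset.supIndep_iff_pairwiseDisjoint, coe_insert]
    intro a ha b hb hab
    rcases ha with rfl | ha <;> rcases hb with rfl | hb
    · exact absurd rfl hab
    · exact (hdisjS b hb).symm
    · exact hdisjS a ha
    · exact P.disjoint (hS ha) (hS hb) hab
  · have hxu : T ∪ S = P.parts := Finset.sdiff_union_of_subset hS
    rw [Finset.sup_insert, hbig, id_eq, ← Finset.sup_union, hxu]
    exact P.sup_parts
  · intro hbot
    rcases Finset.mem_insert.1 hbot with h | h
    · exact hbigne.ne_empty h.symm
    · exact P.bot_notMem (hS h)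
  · show (insert big S).card = m
    rw [Finset.card_insert_of_notMem hbigS, hScard]
    omega
  · intro p hp
    by_cases hpS : p ∈ S
    · exact ⟨p, Finset.mem_insert_of_mem hpS, subset_rfl⟩
    · exact ⟨big, Finset.mem_insert_self _ _,
        Finset.le_sup (f := id) (Finset.mem_sdiff.2 ⟨hp, hpS⟩)⟩

lemma exists_refine_step (P : Finpartition (univ : Finset α))
    (h : P.parts.card < Fintype.card α) :
    ∃ Q : Finpartition (univ : Finset α), Q.parts.card = P.parts.card + 1 ∧
      ∀ p ∈ Q.parts, ∃ q ∈ P.parts, p ⊆ q := by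
  have hsum : ∑ i ∈ P.parts, i.card = Fintype.card α := by
    rw [P.sum_card_parts, Finset.card_univ]
  have hex : ∃ p ∈ P.parts, 2 ≤ p.card := by
    by_contra hno
    push_neg at hno
    have hle : ∑ i ∈ P.parts, i.card ≤ ∑ _i ∈ P.parts, 1 := by
      apply Finset.sum_le_sum
      intro i hi
      have := hno i hi
      omega
    rw [Finset.sum_const, smul_eq_mul, mul_one] at hle
    omega
  obtain ⟨p, hp, hp2⟩ := hex
  obtain ⟨x, hx⟩ := P.nonempty_of_mem_parts hp
  have hpene : (p.erase x).Nonempty := by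
    rw [← Finset.card_pos, Finset.card_erase_of_mem hx]
    omega
  have h1 : ({x} : Finset α) ≠ p.erase x := by
    intro heq
    have : x ∈ p.erase x := heq ▸ Finset.mem_singleton_self x
    exact Finset.notMem_erase x p this
  have h2 : ({x} : Finset α) ∉ P.parts.erase p := by
    intro hmem
    have hxp : ({x} : Finset α) ∈ P.parts := Finset.mem_of_mem_erase hmem
    have hne : ({x} : Finset α) ≠ p := Finset.ne_of_mem_erase hmem
    exact hne (P.eq_of_mem_parts hxp hp (Finset.mem_singleton_self x) hx)
  have h3 : p.erase x ∉ P.parts.erase p := by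
    intro hmem
    obtain ⟨y, hy⟩ := hpene
    have hyp : y ∈ p := Finset.mem_of_mem_erase hy
    have := P.eq_of_mem_parts (Finset.mem_of_mem_erase hmem) hp hy hyp
    exact Finset.ne_of_mem_erase hmem this
  have h4 : ({x} : Finset α) ∉ insert (p.erase x) (P.parts.erase p) := by
    rw [Finset.mem_insert]
    rintro (h | h)
    exacts [h1 h, h2 h]
  have hdisj : ∀ q ∈ P.parts.erase p, Disjoint p q := fun q hq =>
    P.disjoint hp (Finset.mem_of_mem_erase hq) (Finset.ne_of_mem_erase hq).symm
  refine ⟨⟨insert {x} (insert (p.erase x) (P.parts.erase p)), ?_, ?_, ?_⟩, ?_, ?_⟩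
  · rw [Finset.supIndep_iff_pairwiseDisjoint, coe_insert, coe_insert]
    intro a ha b hb hab
    simp only [Function.onFun, id_eq]
    rcases ha with rfl | rfl | ha <;> rcases hb with rfl | rfl | hb
    · exact absurd rfl hab
    · exact Finset.disjoint_singleton_left.2 (Finset.notMem_erase x p)
    · exact Finset.disjoint_singleton_left.2
        (Finset.disjoint_left.1 (hdisj b hb) hx)
    · exact (Finset.disjoint_singleton_left.2 (Finset.notMem_erase x p)).symm
    · exact absurd rfl hab
    · exact (hdisj b hb).mono_left (Finset.erase_subset x p)
    · exact (Finset.disjoint_singleton_left.2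
        (Finset.disjoint_left.1 (hdisj a ha) hx)).symm
    · exact ((hdisj a ha).mono_left (Finset.erase_subset x p)).symm
    · exact P.disjoint (Finset.mem_of_mem_erase ha) (Finset.mem_of_mem_erase hb) hab
  · rw [Finset.sup_insert, Finset.sup_insert, id_eq, id_eq, ← sup_assoc]
    have hxu : ({x} : Finset α) ⊔ p.erase x = p := by
      rw [sup_eq_union, ← Finset.insert_eq, Finset.insert_erase hx]
    rw [hxu]
    have : p ⊔ (P.parts.erase p).sup id = (insert p (P.parts.erase p)).sup id := by
      rw [Finset.sup_insert, id_eq]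
    rw [this, Finset.insert_erase hp]
    exact P.sup_parts
  · intro hbot
    rcases Finset.mem_insert.1 hbot with hh | hh
    · exact Finset.singleton_ne_empty x hh.symm
    · rcases Finset.mem_insert.1 hh with hh' | hh'
      · exact hpene.ne_empty hh'.symm
      · exact P.bot_notMem (Finset.mem_of_mem_erase hh')
  · show (insert {x} (insert (p.erase x) (P.parts.erase p))).card = P.parts.card + 1
    rw [Finset.card_insert_of_notMem h4, Finset.card_insert_of_notMem h3,
      Finset.card_erase_of_mem hp]
    have : 1 ≤ P.parts.card := Finset.card_pos.2 ⟨p, hp⟩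
    omega
  · intro q hq
    rcases Finset.mem_insert.1 hq with rfl | hq'
    · exact ⟨p, hp, Finset.singleton_subset_iff.2 hx⟩
    · rcases Finset.mem_insert.1 hq' with rfl | hq''
      · exact ⟨p, hp, Finset.erase_subset x p⟩
      · exact ⟨q, Finset.mem_of_mem_erase hq'', subset_rfl⟩

lemma exists_refine_aux (d : ℕ) : ∀ P : Finpartition (univ : Finset α),
    P.parts.card + d ≤ Fintype.card α →
    ∃ Q : Finpartition (univ : Finset α), Q.parts.card = P.parts.card + d ∧
      ∀ p ∈ Q.parts, ∃ q ∈ P.parts, p ⊆ q := by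
  induction d with
  | zero => exact fun P _ => ⟨P, by simp, fun p hp => ⟨p, hp, subset_rfl⟩⟩
  | succ d ih =>
    intro P hP
    obtain ⟨Q1, hQ1c, hQ1⟩ := exists_refine_step P (by omega)
    obtain ⟨Q, hQc, hQ⟩ := ih Q1 (by omega)
    refine ⟨Q, by omega, fun p hp => ?_⟩
    obtain ⟨q1, hq1, hpq1⟩ := hQ p hp
    obtain ⟨q, hq, hq1q⟩ := hQ1 q1 hq1
    exact ⟨q, hq, hpq1.trans hq1q⟩

lemma exists_crossing (P : Finpartition (univ : Finset α)) (r : ℕ) (hr1 : 1 ≤ r)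
    (hr : r ≤ Fintype.card α) (_hk : 1 ≤ P.parts.card) :
    ∃ H : Finset α, H.card = r ∧ Crosses H P := by
  have hne : Nonempty α := Fintype.card_pos_iff.1 (by omega)
  set g : Finset α → α := fun c => if h : c.Nonempty then h.choose else Classical.arbitrary α
    with hg
  have hgmem : ∀ c ∈ P.parts, g c ∈ c := by
    intro c hc
    have hcne := P.nonempty_of_mem_parts hc
    rw [hg]
    simp only [dif_pos hcne]
    exact hcne.choose_spec
  have hginj : ∀ c ∈ P.parts, ∀ c' ∈ P.parts, g c = g c' → c = c' := by
    intro c hc c' hc' hcc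
    exact P.eq_of_mem_parts hc hc' (hgmem c hc) (hcc ▸ hgmem c' hc')
  by_cases hcase : r ≤ P.parts.card
  · obtain ⟨S, hS, hScard⟩ := Finset.exists_subset_card_eq hcase
    refine ⟨S.image g, ?_, ?_⟩
    · rw [Finset.card_image_of_injOn, hScard]
      exact fun c hc c' hc' => hginj c (hS hc) c' (hS hc')
    · have hfilt : (P.parts.filter fun c => (c ∩ S.image g).Nonempty) = S := by
        apply Finset.Subset.antisymm
        · intro c hc
          rw [Finset.mem_filter] at hc
          obtain ⟨y, hy⟩ := hc.2
          rw [Finset.mem_inter] at hy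
          obtain ⟨s, hs, rfl⟩ := Finset.mem_image.1 hy.2
          rwa [P.eq_of_mem_parts hc.1 (hS hs) hy.1 (hgmem s (hS hs))]
        · intro s hs
          rw [Finset.mem_filter]
          exact ⟨hS hs, ⟨g s, Finset.mem_inter.2
            ⟨hgmem s (hS hs), Finset.mem_image_of_mem g hs⟩⟩⟩
      rw [Crosses, hfilt, hScard, Finset.card_image_of_injOn
        (fun c hc c' hc' => hginj c (hS hc) c' (hS hc')), hScard]
      omega
  · set T := P.parts.image g with hT
    have hTcard : T.card = P.parts.card :=
      Finset.card_image_of_injOn (fun c hc c' hc' => hginj c hc c' hc')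
    obtain ⟨E, hE, hEcard⟩ : ∃ E ⊆ univ \ T, E.card = r - P.parts.card := by
      apply Finset.exists_subset_card_eq
      rw [Finset.card_sdiff_of_subset (Finset.subset_univ T), Finset.card_univ, hTcard]
      omega
    have hdisj : Disjoint T E := by
      rw [Finset.disjoint_right]
      intro a ha
      exact (Finset.mem_sdiff.1 (hE ha)).2
    refine ⟨T ∪ E, ?_, ?_⟩
    · rw [Finset.card_union_of_disjoint hdisj, hTcard, hEcard]
      omega
    · have hfilt : (P.parts.filter fun c => (c ∩ (T ∪ E)).Nonempty) = P.parts := by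
        apply Finset.filter_true_of_mem
        intro c hc
        exact ⟨g c, Finset.mem_inter.2 ⟨hgmem c hc,
          Finset.mem_union_left _ (Finset.mem_image_of_mem g hc)⟩⟩
      rw [Crosses, hfilt, Finset.card_union_of_disjoint hdisj, hTcard, hEcard]
      omega

end Aux

theorem stmt0 (n k k' r : ℕ)
    (h : (2 ≤ r ∧ r ≤ k ∧ k ≤ k' ∧ k' ≤ n) ∨ (2 ≤ k' ∧ k' ≤ k ∧ k ≤ r ∧ r ≤ n)) :
    (∀ 𝓗 : Finset (Finset (Fin n)), (∀ H ∈ 𝓗, H.card = r) →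
      CrossesAllPartitions 𝓗 k → CrossesAllPartitions 𝓗 k') ∧
    f n k r ≥ f n k' r := by
  have hfin : Fintype.card (Fin n) = n := Fintype.card_fin n
  have key : ∀ 𝓗 : Finset (Finset (Fin n)), (∀ H ∈ 𝓗, H.card = r) →
      CrossesAllPartitions 𝓗 k → CrossesAllPartitions 𝓗 k' := by
    intro 𝓗 hunif hcross P' hP'
    rcases h with ⟨h2r, hrk, hkk', hk'n⟩ | ⟨h2k', hk'k, hkr, hrn⟩
    · -- coarsen P' (k' parts) to Q (k parts)
      obtain ⟨Q, hQc, hQle⟩ := exists_coarsen P' k (by omega) (by omega)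
      obtain ⟨H, hH, hHc⟩ := hcross Q hQc
      refine ⟨H, hH, ?_⟩
      have h1 := filter_meet_card_le P' H
      have h2 := filter_meet_card_mono P' Q H hQle
      rw [Crosses] at hHc ⊢
      rw [hunif H hH] at hHc h1 ⊢
      rw [hQc, min_eq_left hrk] at hHc
      rw [hP', min_eq_left (hrk.trans hkk')]
      omega
    · -- refine P' (k' parts) to Q (k parts)
      obtain ⟨Q, hQc, hQle⟩ := exists_refine_aux (k - k') P' (by rw [hfin, hP']; omega)
      rw [hP'] at hQc
      have hQk : Q.parts.card = k := by omega
      obtain ⟨H, hH, hHc⟩ := hcross Q hQk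
      refine ⟨H, hH, ?_⟩
      rw [Crosses, hunif H hH, hQk, min_eq_right hkr] at hHc
      have hfiltQ : (Q.parts.filter fun c => (c ∩ H).Nonempty) = Q.parts := by
        apply Finset.eq_of_subset_of_card_le (Finset.filter_subset _ _)
        rw [hHc]
        exact hQk.le
      have hall : ∀ c ∈ P'.parts, (c ∩ H).Nonempty := by
        intro c hc
        obtain ⟨x, hx⟩ := P'.nonempty_of_mem_parts hc
        obtain ⟨q, hq, hxq⟩ := Q.exists_mem (Finset.mem_univ x)
        have hqf : q ∈ Q.parts.filter fun c => (c ∩ H).Nonempty := by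
          rw [hfiltQ]; exact hq
        obtain ⟨y, hy⟩ := (Finset.mem_filter.1 hqf).2
        obtain ⟨c', hc', hqc'⟩ := hQle q hq
        have hcc' : c = c' := P'.eq_of_mem_parts hc hc' hx (hqc' hxq)
        rw [Finset.mem_inter] at hy
        exact ⟨y, Finset.mem_inter.2 ⟨hcc' ▸ hqc' hy.1, hy.2⟩⟩
      rw [Crosses, Finset.filter_true_of_mem hall, hunif H hH, hP',
        min_eq_right (hk'k.trans hkr)]
  refine ⟨key, ?_⟩
  have hfacts : 1 ≤ r ∧ r ≤ n ∧ 1 ≤ k := by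
    rcases h with ⟨a, b, c, d⟩ | ⟨a, b, c, d⟩ <;> omega
  have hwit : ∃ 𝓗 : Finset (Finset (Fin n)),
      (∀ H ∈ 𝓗, H.card = r) ∧ CrossesAllPartitions 𝓗 k := by
    refine ⟨Finset.powersetCard r univ,
      fun H hH => Finset.mem_powersetCard_univ.1 hH, ?_⟩
    intro P hP
    obtain ⟨H, hHcard, hHc⟩ := exists_crossing P r hfacts.1
      (by rw [hfin]; exact hfacts.2.1) (by rw [hP]; exact hfacts.2.2)
    exact ⟨H, Finset.mem_powersetCard_univ.2 hHcard, hHc⟩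
  obtain ⟨𝓗₀, h𝓗u, h𝓗c⟩ := hwit
  have hAne : { m | ∃ 𝓗 : Finset (Finset (Fin n)),
      (∀ H ∈ 𝓗, H.card = r) ∧ CrossesAllPartitions 𝓗 k ∧ 𝓗.card = m }.Nonempty :=
    ⟨𝓗₀.card, 𝓗₀, h𝓗u, h𝓗c, rfl⟩
  have hmem := Nat.sInf_mem hAne
  obtain ⟨𝓗, hu, hc, hcard⟩ := hmem
  exact Nat.sInf_le ⟨𝓗, hu, key 𝓗 hu hc, hcard⟩
end

section
/- For all integers n, k, r with n ≥ k ≥ 2 and n ≥ r ≥ 2, f(n,k,r) ≤ f(n,r,r). -/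
open Finset

section Aux

variable {α : Type*} [Fintype α] [DecidableEq α]

/-- The partition of `univ` into the fibers of a surjective map. -/
def fiberFinpartition {β : Type*} [Fintype β] [DecidableEq β] (c : α → β)
    (hc : Function.Surjective c) : Finpartition (univ : Finset α) where
  parts := (univ : Finset β).image fun b => univ.filter fun a => c a = b
  supIndep := by
    rw [Finset.supIndep_iff_pairwiseDisjoint]
    intro s hs t ht hst
    simp only [coe_image, Set.mem_image, mem_coe, mem_univ, true_and] at hs ht
    obtain ⟨b₁, _, rfl⟩ := hs
    obtain ⟨b₂, _, rfl⟩ := ht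
    refine Finset.disjoint_left.2 fun a ha₁ ha₂ => hst ?_
    have h₁ := (mem_filter.1 ha₁).2
    have h₂ := (mem_filter.1 ha₂).2
    rw [show b₁ = b₂ from h₁ ▸ h₂]
  sup_parts := by
    refine le_antisymm (Finset.sup_le fun s _ => subset_univ s) fun a _ => ?_
    rw [Finset.mem_sup]
    exact ⟨univ.filter fun x => c x = c a, mem_image_of_mem _ (mem_univ _),
      mem_filter.2 ⟨mem_univ a, rfl⟩⟩
  bot_notMem := by
    intro h
    obtain ⟨b, _, hb⟩ := mem_image.1 h
    obtain ⟨a, rfl⟩ := hc b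
    have : a ∈ univ.filter fun x => c x = c a := mem_filter.2 ⟨mem_univ a, rfl⟩
    rw [hb] at this
    exact absurd this (notMem_empty a)

lemma fiberFinpartition_parts {β : Type*} [Fintype β] [DecidableEq β] (c : α → β)
    (hc : Function.Surjective c) :
    (fiberFinpartition c hc).parts = (univ : Finset β).image fun b => univ.filter fun a => c a = b :=
  rfl

lemma fiberFinpartition_card {β : Type*} [Fintype β] [DecidableEq β] (c : α → β)
    (hc : Function.Surjective c) :
    (fiberFinpartition c hc).parts.card = Fintype.card β := by
  rw [fiberFinpartition_parts, Finset.card_image_of_injOn, card_univ]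
  intro b₁ _ b₂ _ h
  obtain ⟨a, rfl⟩ := hc b₁
  have h' : univ.filter (fun x => c x = c a) = univ.filter fun x => c x = b₂ := h
  have ha : a ∈ univ.filter fun x => c x = c a := mem_filter.2 ⟨mem_univ a, rfl⟩
  rw [h'] at ha
  exact (mem_filter.1 ha).2

/-- A system of distinct representatives for a partition with `k` parts, indexed via a
given equivalence with `Fin k`. -/
lemma exists_rep (P : Finpartition (univ : Finset α)) {k : ℕ} (e : {x // x ∈ P.parts} ≃ Fin k) :
    ∃ rep : Fin k → α, Function.Injective rep ∧ ∀ i, rep i ∈ ((e.symm i : {x // x ∈ P.parts}) : Finset α) := by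
  have hne : ∀ i : Fin k, ((e.symm i : {x // x ∈ P.parts}) : Finset α).Nonempty :=
    fun i => P.nonempty_of_mem_parts (e.symm i).2
  refine ⟨fun i => (hne i).choose, ?_, fun i => (hne i).choose_spec⟩
  intro i j hij
  have h₁ := (hne i).choose_spec
  have h₂ := (hne j).choose_spec
  have hij' : (hne i).choose = (hne j).choose := hij
  rw [hij'] at h₁
  have : ((e.symm i : {x // x ∈ P.parts}) : Finset α) = ((e.symm j : {x // x ∈ P.parts}) : Finset α) :=
    P.eq_of_mem_parts (e.symm i).2 (e.symm j).2 h₁ h₂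
  have := e.symm.injective (Subtype.ext this)
  simpa using this

lemma part_eq_of_mem_part {P : Finpartition (univ : Finset α)} {p : Finset α} {a : α}
    (hp : p ∈ P.parts) (ha : a ∈ p) : P.part a = p :=
  P.eq_of_mem_parts (P.part_mem.2 (mem_univ a)) hp (P.mem_part (mem_univ a)) ha

/-- The key lemma: an `r`-uniform system crossing all `r`-partitions crosses all
`k`-partitions. -/
lemma crossesAll_of_crossesAll (𝓗 : Finset (Finset α)) (r k : ℕ) (hr : 1 ≤ r)
    (hrn : r ≤ Fintype.card α)
    (hunif : ∀ H ∈ 𝓗, H.card = r) (hcr : CrossesAllPartitions 𝓗 r) :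
    CrossesAllPartitions 𝓗 k := by
  have hαne : Nonempty α := Fintype.card_pos_iff.1 (by omega)
  intro P hP
  set e : {x // x ∈ P.parts} ≃ Fin k := P.parts.equivFinOfCardEq hP with he
  obtain ⟨rep, hrepinj, hrepmem⟩ := exists_rep P e
  have hpart_rep : ∀ i, P.part (rep i) = ((e.symm i : {x // x ∈ P.parts}) : Finset α) :=
    fun i => part_eq_of_mem_part (e.symm i).2 (hrepmem i)
  have hidx_rep : ∀ i, e ⟨P.part (rep i), P.part_mem.2 (mem_univ _)⟩ = i := by
    intro i
    have : (⟨P.part (rep i), P.part_mem.2 (mem_univ _)⟩ : {x // x ∈ P.parts}) = e.symm i :=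
      Subtype.ext (hpart_rep i)
    rw [this, Equiv.apply_symm_apply]
  rcases le_or_gt k r with hkr | hrk
  · -- refine the partition: k ≤ r
    -- choose r - k extra elements avoiding the representatives
    have hR : (Finset.univ.image rep).card = k := by
      rw [card_image_of_injective _ hrepinj, card_univ, Fintype.card_fin]
    have hcompl : r - k ≤ (univ \ Finset.univ.image rep).card := by
      rw [card_sdiff_of_subset (subset_univ _), card_univ, hR]
      omega
    obtain ⟨E, hE, hEcard⟩ := Finset.exists_subset_card_eq hcompl
    classical
    let β := {x // x ∈ E} ⊕ Fin k
    have hβcard : Fintype.card β = r := by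
      simp only [β, Fintype.card_sum, Fintype.card_coe, Fintype.card_fin, hEcard]
      omega
    let c : α → β := fun a =>
      if h : a ∈ E then Sum.inl ⟨a, h⟩ else Sum.inr (e ⟨P.part a, P.part_mem.2 (mem_univ a)⟩)
    have hrepE : ∀ i, rep i ∉ E := by
      intro i hi
      have := hE hi
      rw [mem_sdiff] at this
      exact this.2 (mem_image_of_mem _ (mem_univ i))
    have hc : Function.Surjective c := by
      rintro (⟨a, ha⟩ | i)
      · exact ⟨a, dif_pos ha⟩
      · refine ⟨rep i, ?_⟩
        simp only [c, dif_neg (hrepE i)]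
        rw [hidx_rep i]
    set Q := fiberFinpartition c hc with hQ
    obtain ⟨H, hH, hHc⟩ := hcr Q (by rw [hQ, fiberFinpartition_card, hβcard])
    have hHcard : H.card = r := hunif H hH
    refine ⟨H, hH, ?_⟩
    -- H meets every fiber of Q
    have hQfull : ∀ s ∈ Q.parts, (s ∩ H).Nonempty := by
      have hsub : Q.parts.filter (fun s => (s ∩ H).Nonempty) ⊆ Q.parts := filter_subset _ _
      have hcards : (Q.parts.filter fun s => (s ∩ H).Nonempty).card = Q.parts.card := by
        rw [hHc, hHcard, hQ, fiberFinpartition_card, hβcard, min_self]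
      have := Finset.eq_of_subset_of_card_le hsub (le_of_eq hcards.symm)
      intro s hs
      rw [← this] at hs
      exact (mem_filter.1 hs).2
    -- every part of P meets H
    have hfull : P.parts.filter (fun p => (p ∩ H).Nonempty) = P.parts := by
      rw [filter_eq_self]
      intro p hp
      have hfib : (univ.filter fun a => c a = Sum.inr (e ⟨p, hp⟩)) ∈ Q.parts :=
        mem_image_of_mem _ (mem_univ _)
      obtain ⟨a, ha⟩ := hQfull _ hfib
      rw [mem_inter, mem_filter] at ha
      have hca := ha.1.2
      have haE : a ∉ E := by
        intro hEa
        rw [show c a = Sum.inl ⟨a, hEa⟩ from dif_pos hEa] at hca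
        exact Sum.inl_ne_inr hca
      rw [show c a = Sum.inr (e ⟨P.part a, P.part_mem.2 (mem_univ a)⟩) from dif_neg haE] at hca
      have heq : (⟨P.part a, P.part_mem.2 (mem_univ a)⟩ : {x // x ∈ P.parts}) = ⟨p, hp⟩ :=
        e.injective (Sum.inr.inj hca)
      have hpa : P.part a = p := congrArg Subtype.val heq
      exact ⟨a, mem_inter.2 ⟨hpa ▸ P.mem_part (mem_univ a), ha.2⟩⟩
    unfold Crosses
    rw [hfull, hP, hHcard]
    omega
  · -- merge the partition: r < k
    let g : Fin k → Fin r := fun i => ⟨min i.val (r - 1), by omega⟩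
    let c : α → Fin r := fun a => g (e ⟨P.part a, P.part_mem.2 (mem_univ a)⟩)
    have hc : Function.Surjective c := by
      intro j
      have hj : (j : ℕ) < k := lt_of_lt_of_le j.2 (le_of_lt hrk)
      refine ⟨rep ⟨j, hj⟩, ?_⟩
      simp only [c]
      rw [hidx_rep]
      have : (j : ℕ) ≤ r - 1 := by omega
      simp [g, min_eq_left this]
    set Q := fiberFinpartition c hc with hQ
    obtain ⟨H, hH, hHc⟩ := hcr Q (by rw [hQ, fiberFinpartition_card, Fintype.card_fin])
    have hHcard : H.card = r := hunif H hH
    refine ⟨H, hH, ?_⟩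
    have hQfull : ∀ s ∈ Q.parts, (s ∩ H).Nonempty := by
      have hsub : Q.parts.filter (fun s => (s ∩ H).Nonempty) ⊆ Q.parts := filter_subset _ _
      have hcards : (Q.parts.filter fun s => (s ∩ H).Nonempty).card = Q.parts.card := by
        rw [hHc, hHcard, hQ, fiberFinpartition_card, Fintype.card_fin, min_self]
      have := Finset.eq_of_subset_of_card_le hsub (le_of_eq hcards.symm)
      intro s hs
      rw [← this] at hs
      exact (mem_filter.1 hs).2
    -- for each j : Fin r choose an element of H in the fiber of j
    have hfib : ∀ j : Fin r, ∃ a, a ∈ H ∧ c a = j := by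
      intro j
      have hfib : (univ.filter fun a => c a = j) ∈ Q.parts := mem_image_of_mem _ (mem_univ _)
      obtain ⟨a, ha⟩ := hQfull _ hfib
      rw [mem_inter, mem_filter] at ha
      exact ⟨a, ha.2, ha.1.2⟩
    choose w hwH hwc using hfib
    set F := P.parts.filter fun p => (p ∩ H).Nonempty with hF
    have hle : F.card ≤ r := by
      have hch : ∀ p ∈ F, ∃ a, a ∈ p ∩ H := by
        intro p hp
        exact (mem_filter.1 hp).2
      choose v hv using hch
      calc F.card ≤ H.card := by
            refine Finset.card_le_card_of_injOn (fun p => if h : p ∈ F then v p h else Classical.arbitrary _) ?_ ?_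
            · intro p hp
              simp only [mem_coe] at hp ⊢
              simp only [dif_pos hp]
              exact (mem_inter.1 (hv p hp)).2
            · intro p₁ hp₁ p₂ hp₂ hv₁₂
              simp only [mem_coe] at hp₁ hp₂
              simp only [dif_pos hp₁, dif_pos hp₂] at hv₁₂
              have h₁ := (mem_inter.1 (hv p₁ hp₁)).1
              have h₂ := (mem_inter.1 (hv p₂ hp₂)).1
              rw [hv₁₂] at h₁
              exact P.eq_of_mem_parts (mem_filter.1 hp₁).1 (mem_filter.1 hp₂).1 h₁ h₂
        _ = r := hHcard
    have hge : r ≤ F.card := by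
      have : (univ : Finset (Fin r)).card ≤ F.card := by
        refine Finset.card_le_card_of_injOn (fun j => P.part (w j)) ?_ ?_
        · intro j _
          rw [mem_coe, hF, mem_filter]
          exact ⟨P.part_mem.2 (mem_univ _),
            ⟨w j, mem_inter.2 ⟨P.mem_part (mem_univ _), hwH j⟩⟩⟩
        · intro j₁ _ j₂ _ hj
          have hj' : P.part (w j₁) = P.part (w j₂) := hj
          have : c (w j₁) = c (w j₂) := by
            show g (e ⟨P.part (w j₁), P.part_mem.2 (mem_univ _)⟩) = g (e ⟨P.part (w j₂), P.part_mem.2 (mem_univ _)⟩)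
            congr 1
            exact congrArg e (Subtype.ext hj')
          rw [hwc j₁, hwc j₂] at this
          exact this
      rwa [card_univ, Fintype.card_fin] at this
    unfold Crosses
    rw [← hF, hHcard, hP]
    omega

end Aux

theorem stmt4 (n k r : ℕ) (hk : 2 ≤ k) (hkn : k ≤ n) (hr : 2 ≤ r) (hrn : r ≤ n) :
    f n k r ≤ f n r r := by
  have hcard : Fintype.card (Fin n) = n := Fintype.card_fin n
  have hne : { m | ∃ 𝓗 : Finset (Finset (Fin n)),
      (∀ H ∈ 𝓗, H.card = r) ∧ CrossesAllPartitions 𝓗 r ∧ 𝓗.card = m }.Nonempty := by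
    refine ⟨_, Finset.powersetCard r univ, fun H hH => by
      simpa using (Finset.mem_powersetCard_univ.1 hH), ?_, rfl⟩
    intro P hP
    set e : {x // x ∈ P.parts} ≃ Fin r := P.parts.equivFinOfCardEq hP with he
    obtain ⟨rep, hrepinj, hrepmem⟩ := exists_rep P e
    have hHcard : (Finset.univ.image rep).card = r := by
      rw [card_image_of_injective _ hrepinj, card_univ, Fintype.card_fin]
    refine ⟨Finset.univ.image rep, Finset.mem_powersetCard_univ.2 hHcard, ?_⟩
    unfold Crosses
    have hfull : P.parts.filter (fun p => (p ∩ Finset.univ.image rep).Nonempty) = P.parts := by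
      rw [Finset.filter_eq_self]
      intro p hp
      refine ⟨rep (e ⟨p, hp⟩), mem_inter.2 ⟨?_, mem_image_of_mem _ (mem_univ _)⟩⟩
      have := hrepmem (e ⟨p, hp⟩)
      rwa [Equiv.symm_apply_apply] at this
    rw [hfull, hP, hHcard, min_self]
  have h1 := Nat.sInf_mem hne
  obtain ⟨𝓗, hunif, hcr, hm⟩ := h1
  apply Nat.sInf_le
  exact ⟨𝓗, hunif, crossesAll_of_crossesAll 𝓗 r k (by omega) (by omega) hunif hcr, hm⟩
end

section
/- Let k ≥ 2 be an integer and let (X, H) be a hypergraph of order n in which every edge has cardinality at least k. If H crosses all k-partitions of X, then Σ_{H ∈ H} C(|H|, k) / (|H| − k + 2) ≥ C(n, k) / (n − k + 2), where C(a, b) denotes the binomial coefficient. -/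
open Finset

/-! ### Auxiliary lemmas -/

lemma my_sum_image_le {α β : Type*} [DecidableEq α] [DecidableEq β]
    (s : Finset α) (f : α → β) (g : β → ℕ) :
    ∑ b ∈ s.image f, g b ≤ ∑ a ∈ s, g (f a) := by
  induction s using Finset.induction with
  | empty => simp
  | @insert a s ha ih =>
    rw [image_insert, sum_insert ha]
    by_cases hf : f a ∈ s.image f
    · rw [insert_eq_self.2 hf]; omega
    · rw [sum_insert hf]; omega

/-- If a family of subsets of `R` crosses every bipartition of `R`, then
`∑ (|F| - 1) ≥ |R| - 1`. -/
lemma conn_aux {α : Type*} [DecidableEq α] :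
    ∀ (m : ℕ) (𝓕 : Finset (Finset α)) (R : Finset α), 𝓕.card ≤ m →
    (∀ F ∈ 𝓕, F ⊆ R) →
    (∀ A B : Finset α, A ∪ B = R → Disjoint A B → A.Nonempty → B.Nonempty →
      ∃ F ∈ 𝓕, (F ∩ A).Nonempty ∧ (F ∩ B).Nonempty) →
    R.card - 1 ≤ ∑ F ∈ 𝓕, (F.card - 1) := by
  intro m
  induction m with
  | zero =>
    intro 𝓕 R hm hsub hcr
    rcases le_or_gt R.card 1 with h1 | h1
    · omega
    · obtain ⟨v, hv⟩ : R.Nonempty := card_pos.1 (by omega)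
      obtain ⟨w, hw⟩ : (R.erase v).Nonempty := by
        rw [← card_pos, card_erase_of_mem hv]; omega
      obtain ⟨F, hF, -⟩ := hcr {v} (R.erase v) (by rw [← Finset.insert_eq, insert_erase hv])
        (Finset.disjoint_singleton_left.2 (notMem_erase v R)) ⟨v, mem_singleton_self v⟩ ⟨w, hw⟩
      simp only [Nat.le_zero, card_eq_zero] at hm
      simp [hm] at hF
  | succ m ih =>
    intro 𝓕 R hm hsub hcr
    rcases le_or_gt R.card 1 with h1 | h1
    · omega
    obtain ⟨v, hv⟩ : R.Nonempty := card_pos.1 (by omega)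
    obtain ⟨w, hw⟩ : (R.erase v).Nonempty := by
      rw [← card_pos, card_erase_of_mem hv]; omega
    obtain ⟨F₀, hF₀, hF₀v, hF₀w⟩ := hcr {v} (R.erase v)
      (by rw [← Finset.insert_eq, insert_erase hv])
      (Finset.disjoint_singleton_left.2 (notMem_erase v R))
      ⟨v, mem_singleton_self v⟩ ⟨w, hw⟩
    have hvF₀ : v ∈ F₀ := by
      obtain ⟨x, hx⟩ := hF₀v; simp only [mem_inter, mem_singleton] at hx
      rcases hx with ⟨h1, h2⟩; rwa [h2] at h1
    have hF₀2 : 2 ≤ F₀.card := by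
      obtain ⟨y, hy⟩ := hF₀w
      simp only [mem_inter, mem_erase] at hy
      exact Finset.one_lt_card.2 ⟨v, hvF₀, y, hy.1, fun h => hy.2.1 (h ▸ rfl)⟩
    have hF₀R : F₀ ⊆ R := hsub F₀ hF₀
    -- contract F₀ to v
    set ct : Finset α → Finset α := fun F => if (F ∩ F₀).Nonempty then insert v (F \ F₀) else F with hct
    set R' : Finset α := R \ (F₀.erase v) with hR'
    set 𝓕' : Finset (Finset α) := (𝓕.erase F₀).image ct with h𝓕'
    have hvR' : v ∈ R' := by
      simp only [hR', mem_sdiff, mem_erase]; exact ⟨hv, fun h => h.1 rfl⟩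
    have hctsub : ∀ F ∈ 𝓕', F ⊆ R' := by
      intro F' hF'
      obtain ⟨F, hF, rfl⟩ := mem_image.1 hF'
      have hFR : F ⊆ R := hsub F (mem_of_mem_erase hF)
      simp only [hct]
      split_ifs with h
      · intro x hx
        rcases mem_insert.1 hx with rfl | hx
        · exact hvR'
        · simp only [mem_sdiff] at hx
          simp only [hR', mem_sdiff, mem_erase]
          exact ⟨hFR hx.1, fun hc => hx.2 hc.2⟩
      · intro x hx
        simp only [hR', mem_sdiff, mem_erase]
        refine ⟨hFR hx, fun hc => ?_⟩
        rw [Finset.not_nonempty_iff_eq_empty] at h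
        have : x ∈ F ∩ F₀ := mem_inter.2 ⟨hx, hc.2⟩
        simp [h] at this
    -- crossing for the contracted system, when v ∈ A
    have key : ∀ A B : Finset α, A ∪ B = R' → Disjoint A B → A.Nonempty → B.Nonempty →
        v ∈ A → ∃ F ∈ 𝓕', (F ∩ A).Nonempty ∧ (F ∩ B).Nonempty := by
      intro A B hAB hdis hA hB hvA
      have hBR' : B ⊆ R' := hAB ▸ subset_union_right
      have hBF₀ : Disjoint B F₀ := by
        rw [Finset.disjoint_left]
        intro x hxB hxF₀
        have hx' := hBR' hxB
        simp only [hR', mem_sdiff, mem_erase] at hx'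
        have : x = v := by by_contra h; exact hx'.2 ⟨h, hxF₀⟩
        exact (Finset.disjoint_left.1 hdis hvA) (this ▸ hxB)
      obtain ⟨F, hF, hFA, hFB⟩ := hcr (A ∪ F₀) B
        (by
          rw [union_right_comm, hAB]
          apply Finset.Subset.antisymm
          · exact union_subset (sdiff_subset) hF₀R
          · intro x hx
            by_cases hxe : x ∈ F₀.erase v
            · exact mem_union_right _ (mem_of_mem_erase hxe)
            · exact mem_union_left _ (mem_sdiff.2 ⟨hx, hxe⟩))
        (by
          rw [Finset.disjoint_union_left]
          exact ⟨hdis, hBF₀.symm⟩)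
        ⟨v, mem_union_left _ hvA⟩ hB
      have hFneF₀ : F ≠ F₀ := by
        rintro rfl
        obtain ⟨y, hy⟩ := hFB
        exact (Finset.disjoint_right.1 hBF₀ (mem_inter.1 hy).1) (mem_inter.1 hy).2
      refine ⟨ct F, mem_image_of_mem ct (mem_erase.2 ⟨hFneF₀, hF⟩), ?_, ?_⟩
      · obtain ⟨y, hy⟩ := hFA
        rcases mem_union.1 (mem_inter.1 hy).2 with hyA | hyF₀
        · by_cases hyF₀' : y ∈ F₀
          · refine ⟨v, mem_inter.2 ⟨?_, hvA⟩⟩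
            simp only [hct]
            rw [if_pos ⟨y, mem_inter.2 ⟨(mem_inter.1 hy).1, hyF₀'⟩⟩]
            exact mem_insert_self v _
          · refine ⟨y, mem_inter.2 ⟨?_, hyA⟩⟩
            simp only [hct]
            split_ifs with h
            · exact mem_insert_of_mem (mem_sdiff.2 ⟨(mem_inter.1 hy).1, hyF₀'⟩)
            · exact (mem_inter.1 hy).1
        · refine ⟨v, mem_inter.2 ⟨?_, hvA⟩⟩
          simp only [hct]
          rw [if_pos ⟨y, mem_inter.2 ⟨(mem_inter.1 hy).1, hyF₀⟩⟩]
          exact mem_insert_self v _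
      · obtain ⟨y, hy⟩ := hFB
        have hyF : y ∈ F := (mem_inter.1 hy).1
        have hyB : y ∈ B := (mem_inter.1 hy).2
        have hyF₀ : y ∉ F₀ := Finset.disjoint_left.1 hBF₀ hyB
        refine ⟨y, mem_inter.2 ⟨?_, hyB⟩⟩
        simp only [hct]
        split_ifs with h
        · exact mem_insert_of_mem (mem_sdiff.2 ⟨hyF, hyF₀⟩)
        · exact hyF
    have hcr' : ∀ A B : Finset α, A ∪ B = R' → Disjoint A B → A.Nonempty → B.Nonempty →
        ∃ F ∈ 𝓕', (F ∩ A).Nonempty ∧ (F ∩ B).Nonempty := by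
      intro A B hAB hdis hA hB
      have hvAB : v ∈ A ∪ B := hAB ▸ hvR'
      rcases mem_union.1 hvAB with hvA | hvB
      · exact key A B hAB hdis hA hB hvA
      · obtain ⟨F, hF, h1a, h2a⟩ := key B A (by rw [union_comm]; exact hAB) hdis.symm hB hA hvB
        exact ⟨F, hF, h2a, h1a⟩
    have hm' : 𝓕'.card ≤ m := by
      have h1a : 𝓕'.card ≤ (𝓕.erase F₀).card := card_image_le
      have h2a : (𝓕.erase F₀).card = 𝓕.card - 1 := card_erase_of_mem hF₀
      have h3a : 1 ≤ 𝓕.card := card_pos.2 ⟨F₀, hF₀⟩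
      omega
    have hIH := ih 𝓕' R' hm' hctsub hcr'
    have himg : ∑ F ∈ 𝓕', (F.card - 1) ≤ ∑ F ∈ 𝓕.erase F₀, ((ct F).card - 1) :=
      my_sum_image_le _ ct (fun F => F.card - 1)
    have hctcard : ∀ F ∈ 𝓕.erase F₀, (ct F).card ≤ F.card := by
      intro F _
      simp only [hct]
      split_ifs with h
      · have h1a : (insert v (F \ F₀)).card ≤ (F \ F₀).card + 1 := card_insert_le _ _
        have h2a : (F \ F₀).card + (F ∩ F₀).card = F.card := card_sdiff_add_card_inter F F₀
        have h3a : 1 ≤ (F ∩ F₀).card := card_pos.2 h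
        omega
      · exact le_rfl
    have hsum2 : ∑ F ∈ 𝓕.erase F₀, ((ct F).card - 1) ≤ ∑ F ∈ 𝓕.erase F₀, (F.card - 1) :=
      Finset.sum_le_sum (fun F hF => by have := hctcard F hF; omega)
    have hsplit : ∑ F ∈ 𝓕, (F.card - 1) = (F₀.card - 1) + ∑ F ∈ 𝓕.erase F₀, (F.card - 1) :=
      (Finset.add_sum_erase _ _ hF₀).symm
    have hR'card : R'.card = R.card - (F₀.card - 1) := by
      rw [hR', card_sdiff_of_subset (fun x hx => hF₀R (mem_of_mem_erase hx)), card_erase_of_mem hvF₀]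
    have hF₀le : F₀.card ≤ R.card := card_le_card hF₀R
    have hvR'' : 1 ≤ R'.card := card_pos.2 ⟨v, hvR'⟩
    omega

/-- Crossing all `k`-partitions yields, for each `(k-2)`-set `T` and bipartition
of the complement, an edge containing `T` and meeting both sides. -/
lemma cross_bipartition {n k : ℕ} (hk : 2 ≤ k) (𝓗 : Finset (Finset (Fin n)))
    (hbig : ∀ H ∈ 𝓗, k ≤ H.card) (hcross : CrossesAllPartitions 𝓗 k)
    (T : Finset (Fin n)) (hT : T.card = k - 2)
    (A B : Finset (Fin n)) (hAB : A ∪ B = univ \ T) (hdis : Disjoint A B)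
    (hA : A.Nonempty) (hB : B.Nonempty) :
    ∃ H ∈ 𝓗, T ⊆ H ∧ (A ∩ H).Nonempty ∧ (B ∩ H).Nonempty := by
  have hAT : Disjoint A T := by
    have hsub : A ⊆ univ \ T := hAB ▸ subset_union_left
    exact disjoint_left.2 fun x hxA hxT => (mem_sdiff.1 (hsub hxA)).2 hxT
  have hBT : Disjoint B T := by
    have hsub : B ⊆ univ \ T := hAB ▸ subset_union_right
    exact disjoint_left.2 fun x hxB hxT => (mem_sdiff.1 (hsub hxB)).2 hxT
  set sing : Finset (Finset (Fin n)) := T.image fun t => ({t} : Finset (Fin n)) with hsing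
  set parts : Finset (Finset (Fin n)) := sing ∪ {A, B} with hparts
  have hmemsing : ∀ c ∈ sing, ∃ t ∈ T, c = {t} := by
    intro c hc; obtain ⟨t, ht, rfl⟩ := mem_image.1 hc; exact ⟨t, ht, rfl⟩
  have hAnotsing : A ∉ sing := by
    intro h
    obtain ⟨t, ht, hA'⟩ := hmemsing A h
    exact disjoint_left.1 hAT (hA' ▸ mem_singleton_self t) ht
  have hBnotsing : B ∉ sing := by
    intro h
    obtain ⟨t, ht, hB'⟩ := hmemsing B h
    exact disjoint_left.1 hBT (hB' ▸ mem_singleton_self t) ht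
  have hABne : A ≠ B := by
    rintro rfl
    exact hA.ne_empty (disjoint_self.1 hdis)
  have hpd : ∀ c ∈ parts, ∀ d ∈ parts, c ≠ d → Disjoint c d := by
    intro c hc d hd hcd
    have hcase : ∀ x ∈ parts, (∃ t ∈ T, x = {t}) ∨ x = A ∨ x = B := by
      intro x hx
      rcases mem_union.1 hx with h | h
      · exact Or.inl (hmemsing x h)
      · rcases mem_insert.1 h with h | h
        · exact Or.inr (Or.inl h)
        · exact Or.inr (Or.inr (mem_singleton.1 h))
    rcases hcase c hc with ⟨t, ht, rfl⟩ | rfl | rfl <;>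
      rcases hcase d hd with ⟨u, hu, rfl⟩ | rfl | rfl
    · refine disjoint_singleton_left.2 ?_
      simp only [mem_singleton]
      intro h; exact hcd (by rw [h])
    · exact (disjoint_singleton_left.2 fun h => disjoint_left.1 hAT h ht)
    · exact (disjoint_singleton_left.2 fun h => disjoint_left.1 hBT h ht)
    · exact (disjoint_singleton_right.2 fun h => disjoint_left.1 hAT h hu)
    · exact absurd rfl hcd
    · exact hdis
    · exact (disjoint_singleton_right.2 fun h => disjoint_left.1 hBT h hu)
    · exact hdis.symm
    · exact absurd rfl hcd
  have hsup : parts.sup id = univ := by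
    rw [hparts, sup_union]
    have h1 : sing.sup id = T := by
      rw [hsing, sup_image]
      have : (id ∘ fun t => ({t} : Finset (Fin n))) = singleton := rfl
      rw [this, sup_singleton_eq_self]
    have h2 : ({A, B} : Finset (Finset (Fin n))).sup id = A ∪ B := by
      simp [sup_insert, sup_singleton, Finset.sup_eq_union]
    rw [h1, h2, hAB, Finset.sup_eq_union]
    exact Finset.union_sdiff_of_subset (subset_univ T)
  have hnotbot : ⊥ ∉ parts := by
    intro h
    rcases mem_union.1 h with h | h
    · obtain ⟨t, _, ht⟩ := hmemsing ⊥ h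
      exact (singleton_ne_empty t) ht.symm
    · rcases mem_insert.1 h with h | h
      · exact hA.ne_empty h.symm
      · exact hB.ne_empty (mem_singleton.1 h).symm
  have hsupindep : parts.SupIndep id := by
    rw [Finset.supIndep_iff_pairwiseDisjoint]
    intro c hc d hd hcd
    exact hpd c hc d hd hcd
  set P : Finpartition (univ : Finset (Fin n)) := ⟨parts, hsupindep, hsup, hnotbot⟩ with hP
  have hcards : parts.card = k := by
    have hdisj : Disjoint sing {A, B} := by
      rw [Finset.disjoint_right]
      intro x hx
      rcases mem_insert.1 hx with rfl | hx
      · exact hAnotsing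
      · rw [mem_singleton.1 hx]; exact hBnotsing
    rw [hparts, card_union_of_disjoint hdisj, card_pair hABne]
    have : sing.card = T.card := card_image_of_injective _ (fun a b h => by
      simpa using h)
    rw [this, hT]; omega
  obtain ⟨H, hH, hHcr⟩ := hcross P hcards
  have hHk : k ≤ H.card := hbig H hH
  have hfilt : P.parts.filter (fun c => (c ∩ H).Nonempty) = P.parts := by
    apply Finset.eq_of_subset_of_card_le (filter_subset _ _)
    rw [hHcr]
    simp only [hP, hcards]
    omega
  have hallmeet : ∀ c ∈ parts, (c ∩ H).Nonempty := by
    intro c hc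
    have hc' : c ∈ P.parts.filter (fun c => (c ∩ H).Nonempty) := by
      rw [hfilt]; exact hc
    exact (mem_filter.1 hc').2
  refine ⟨H, hH, ?_, ?_, ?_⟩
  · intro t ht
    have := hallmeet {t} (mem_union_left _ (mem_image_of_mem _ ht))
    obtain ⟨x, hx⟩ := this
    rw [mem_inter, mem_singleton] at hx
    exact hx.1 ▸ hx.2
  · exact hallmeet A (mem_union_right _ (mem_insert_self _ _))
  · exact hallmeet B (mem_union_right _ (mem_insert_of_mem (mem_singleton_self _)))

/-- The per-`T` counting bound. -/
lemma T_bound {n k : ℕ} (hk : 2 ≤ k) (hkn : k ≤ n) (𝓗 : Finset (Finset (Fin n)))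
    (hbig : ∀ H ∈ 𝓗, k ≤ H.card) (hcross : CrossesAllPartitions 𝓗 k)
    (T : Finset (Fin n)) (hT : T.card = k - 2) :
    (n - (k-2)) - 1 ≤ ∑ H ∈ 𝓗.filter (fun H => T ⊆ H), (H.card - (k-2) - 1) := by
  set R : Finset (Fin n) := univ \ T with hR
  set 𝓕 : Finset (Finset (Fin n)) := (𝓗.filter (fun H => T ⊆ H)).image (fun H => H \ T) with h𝓕
  have hsub : ∀ F ∈ 𝓕, F ⊆ R := by
    intro F hF
    obtain ⟨H, _, rfl⟩ := mem_image.1 hF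
    exact sdiff_subset_sdiff (subset_univ H) le_rfl
  have hcr : ∀ A B : Finset (Fin n), A ∪ B = R → Disjoint A B → A.Nonempty → B.Nonempty →
      ∃ F ∈ 𝓕, (F ∩ A).Nonempty ∧ (F ∩ B).Nonempty := by
    intro A B hAB hdis hA hB
    rw [hR] at hAB
    obtain ⟨H, hH, hTH, hAH, hBH⟩ :=
      cross_bipartition hk 𝓗 hbig hcross T hT A B hAB hdis hA hB
    have hAT : Disjoint A T := by
      have hsub' : A ⊆ univ \ T := hAB ▸ subset_union_left
      exact disjoint_left.2 fun x hxA hxT => (mem_sdiff.1 (hsub' hxA)).2 hxT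
    have hBT : Disjoint B T := by
      have hsub' : B ⊆ univ \ T := hAB ▸ subset_union_right
      exact disjoint_left.2 fun x hxB hxT => (mem_sdiff.1 (hsub' hxB)).2 hxT
    refine ⟨H \ T, mem_image_of_mem _ (mem_filter.2 ⟨hH, hTH⟩), ?_, ?_⟩
    · obtain ⟨x, hx⟩ := hAH
      rw [mem_inter] at hx
      exact ⟨x, mem_inter.2 ⟨mem_sdiff.2 ⟨hx.2, disjoint_left.1 hAT hx.1⟩, hx.1⟩⟩
    · obtain ⟨x, hx⟩ := hBH
      rw [mem_inter] at hx
      exact ⟨x, mem_inter.2 ⟨mem_sdiff.2 ⟨hx.2, disjoint_left.1 hBT hx.1⟩, hx.1⟩⟩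
  have hconn := conn_aux 𝓕.card 𝓕 R le_rfl hsub hcr
  have hRcard : R.card = n - (k-2) := by
    rw [hR, card_sdiff_of_subset (subset_univ T), card_univ, Fintype.card_fin, hT]
  have himg : ∑ F ∈ 𝓕, (F.card - 1) ≤
      ∑ H ∈ 𝓗.filter (fun H => T ⊆ H), ((H \ T).card - 1) :=
    my_sum_image_le _ _ (fun F : Finset (Fin n) => F.card - 1)
  have heq : ∀ H ∈ 𝓗.filter (fun H => T ⊆ H), (H \ T).card - 1 = H.card - (k-2) - 1 := by
    intro H hH
    rw [card_sdiff_of_subset (mem_filter.1 hH).2, hT]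
  rw [Finset.sum_congr rfl heq] at himg
  omega

/-- Global counting inequality in `ℕ`. -/
lemma global_bound {n k : ℕ} (hk : 2 ≤ k) (hkn : k ≤ n) (𝓗 : Finset (Finset (Fin n)))
    (hbig : ∀ H ∈ 𝓗, k ≤ H.card) (hcross : CrossesAllPartitions 𝓗 k) :
    (n.choose (k-2)) * ((n - (k-2)) - 1) ≤
      ∑ H ∈ 𝓗, (H.card.choose (k-2)) * (H.card - (k-2) - 1) := by
  set 𝒯 := powersetCard (k-2) (univ : Finset (Fin n)) with h𝒯
  have hcount : ∑ T ∈ 𝒯, ((n - (k-2)) - 1) ≤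
      ∑ T ∈ 𝒯, ∑ H ∈ 𝓗.filter (fun H => T ⊆ H), (H.card - (k-2) - 1) := by
    apply Finset.sum_le_sum
    intro T hT
    exact T_bound hk hkn 𝓗 hbig hcross T (mem_powersetCard.1 hT).2
  have hTcard : 𝒯.card = n.choose (k-2) := by
    rw [h𝒯, card_powersetCard, card_univ, Fintype.card_fin]
  rw [Finset.sum_const, hTcard, smul_eq_mul] at hcount
  refine le_trans hcount (le_of_eq ?_)
  have hswap : ∀ T ∈ 𝒯, ∑ H ∈ 𝓗.filter (fun H => T ⊆ H), (H.card - (k-2) - 1)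
      = ∑ H ∈ 𝓗, if T ⊆ H then (H.card - (k-2) - 1) else 0 := fun T _ =>
    Finset.sum_filter _ _
  rw [Finset.sum_congr rfl hswap, Finset.sum_comm]
  apply Finset.sum_congr rfl
  intro H hH
  rw [← Finset.sum_filter, Finset.sum_const, smul_eq_mul]
  congr 1
  have : 𝒯.filter (fun T => T ⊆ H) = powersetCard (k-2) H := by
    ext T
    simp only [h𝒯, mem_filter, mem_powersetCard, subset_univ, true_and]
    tauto
  rw [this, card_powersetCard]

/-- The key identity, in `ℚ`: for `k ≤ h` and `2 ≤ k`,
`C(h,k)/(h-k+2) = C(h,k-2)*(h-(k-2)-1) / (k*(k-1))`. -/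
lemma key_identity {h k : ℕ} (hk : 2 ≤ k) (hkh : k ≤ h) :
    (h.choose k : ℚ) / ((h : ℚ) - k + 2) =
      ((h.choose (k-2)) * (h - (k-2) - 1) : ℕ) / ((k : ℚ) * ((k : ℚ) - 1)) := by
  obtain ⟨a, rfl⟩ : ∃ a, h = k + a := ⟨h - k, by omega⟩
  have e1 : (k + a).choose k * k = (k + a).choose (k-1) * (a + 1) := by
    have := Nat.choose_succ_right_eq (k + a) (k - 1)
    have hk1 : k - 1 + 1 = k := by omega
    rw [hk1] at this
    rw [this]
    congr 1
    omega
  have e2 : (k + a).choose (k-1) * (k-1) = (k + a).choose (k-2) * (a + 2) := by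
    have := Nat.choose_succ_right_eq (k + a) (k - 2)
    have hk1 : k - 2 + 1 = k - 1 := by omega
    rw [hk1] at this
    rw [this]
    congr 1
    omega
  have natid : (k + a).choose k * (k * (k-1)) = (k + a).choose (k-2) * ((a + 1) * (a + 2)) := by
    calc (k + a).choose k * (k * (k-1)) = ((k + a).choose k * k) * (k-1) := by ring
    _ = ((k + a).choose (k-1) * (a+1)) * (k-1) := by rw [e1]
    _ = ((k + a).choose (k-1) * (k-1)) * (a+1) := by ring
    _ = ((k + a).choose (k-2) * (a+2)) * (a+1) := by rw [e2]
    _ = (k + a).choose (k-2) * ((a + 1) * (a + 2)) := by ring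
  have hsub : k + a - (k - 2) - 1 = a + 1 := by omega
  rw [hsub]
  have hden1 : ((k + a : ℕ) : ℚ) - k + 2 = (a : ℚ) + 2 := by push_cast; ring
  have hden1ne : ((k + a : ℕ) : ℚ) - k + 2 ≠ 0 := by
    rw [hden1]; positivity
  have hden2ne : (k : ℚ) * ((k : ℚ) - 1) ≠ 0 := by
    have h1 : (k : ℚ) ≥ 2 := by exact_mod_cast hk
    have : (k : ℚ) - 1 > 0 := by linarith
    positivity
  rw [div_eq_div_iff hden1ne hden2ne, hden1]
  have := congrArg (fun x : ℕ => (x : ℚ)) natid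
  push_cast at this ⊢
  have hk1 : ((k - 1 : ℕ) : ℚ) = (k : ℚ) - 1 := by
    have : (1 : ℕ) ≤ k := by omega
    push_cast [Nat.cast_sub this]
    ring
  rw [hk1] at this
  linarith [this]

theorem stmt5 (n k : ℕ) (hk : 2 ≤ k) (𝓗 : Finset (Finset (Fin n)))
    (hbig : ∀ H ∈ 𝓗, k ≤ H.card)
    (hcross : CrossesAllPartitions 𝓗 k) :
    ∑ H ∈ 𝓗, (H.card.choose k : ℚ) / ((H.card : ℚ) - k + 2) ≥
      (n.choose k : ℚ) / ((n : ℚ) - k + 2) := by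
  have hterm_nonneg : ∀ H ∈ 𝓗, (0 : ℚ) ≤ (H.card.choose k : ℚ) / ((H.card : ℚ) - k + 2) := by
    intro H hH
    have hHk : k ≤ H.card := hbig H hH
    have hden : (0 : ℚ) ≤ (H.card : ℚ) - k + 2 := by
      have : (k : ℚ) ≤ (H.card : ℚ) := by exact_mod_cast hHk
      linarith
    exact div_nonneg (by positivity) hden
  by_cases hkn : k ≤ n
  · -- main case
    have hkQ : (0 : ℚ) < (k : ℚ) * ((k : ℚ) - 1) := by
      have h1 : (k : ℚ) ≥ 2 := by exact_mod_cast hk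
      nlinarith
    have hLHS : ∑ H ∈ 𝓗, (H.card.choose k : ℚ) / ((H.card : ℚ) - k + 2)
        = ((∑ H ∈ 𝓗, (H.card.choose (k-2)) * (H.card - (k-2) - 1) : ℕ) : ℚ)
            / ((k : ℚ) * ((k : ℚ) - 1)) := by
      rw [Finset.sum_congr rfl (fun H hH => key_identity hk (hbig H hH))]
      rw [← Finset.sum_div]
      congr 1
      rw [Nat.cast_sum]
    have hRHS : (n.choose k : ℚ) / ((n : ℚ) - k + 2)
        = (((n.choose (k-2)) * (n - (k-2) - 1) : ℕ) : ℚ) / ((k : ℚ) * ((k : ℚ) - 1)) :=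
      key_identity hk hkn
    rw [hLHS, hRHS, ge_iff_le, div_le_div_iff_of_pos_right hkQ, Nat.cast_le]
    have := global_bound hk hkn 𝓗 hbig hcross
    calc n.choose (k-2) * (n - (k-2) - 1) ≤
        ∑ H ∈ 𝓗, (H.card.choose (k-2)) * (H.card - (k-2) - 1) := this
      _ = _ := rfl
  · -- degenerate case n < k
    have h0 : n.choose k = 0 := Nat.choose_eq_zero_of_lt (by omega)
    rw [h0]
    simp only [Nat.cast_zero, zero_div, ge_iff_le]
    exact Finset.sum_nonneg hterm_nonneg
end

section
/- For all integers n, k, r with n ≥ r ≥ k ≥ 2, f(n,k,r) ≥ (C(n,k) / C(r,k)) · (r − k + 2) / (n − k + 2), where C(a,b) denotes the binomial coefficient. -/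
open Finset

section Lemmas

variable {β : Type*} [DecidableEq β]


lemma span_aux (Y : Finset β) (E : Finset (Finset β)) (hE : ∀ e ∈ E, e ⊆ Y)
    (hcross : ∀ A : Finset β, A ⊆ Y → A.Nonempty → A ≠ Y →
      ∃ e ∈ E, (e ∩ A).Nonempty ∧ (e \ A).Nonempty) :
    ∀ F : Finset (Finset β), ∀ S : Finset β, S.Nonempty → S ⊆ Y →
      (∀ e ∈ E, e ∉ F → e ⊆ S) → Y.card ≤ S.card + ∑ e ∈ F, (e.card - 1) := by
  intro F
  induction F using Finset.strongInduction with
  | _ F ih =>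
    intro S hSne hSY hinv
    by_cases hSeqY : S = Y
    · subst hSeqY; exact Nat.le_add_right _ _
    · obtain ⟨e, heE, heA, heB⟩ := hcross S hSY hSne hSeqY
      have heF : e ∈ F := by
        by_contra h
        obtain ⟨x, hx⟩ := heB
        exact (mem_sdiff.mp hx).2 (hinv e heE h (mem_sdiff.mp hx).1)
      have hstep := ih (F.erase e) (Finset.erase_ssubset heF) (S ∪ e)
        (hSne.mono subset_union_left) (union_subset hSY (hE e heE))
        (fun e' he' hne' => by
          by_cases he'e : e' = e
          · subst he'e; exact subset_union_right
          · exact (hinv e' he' (fun hF => hne' (mem_erase.mpr ⟨he'e, hF⟩))).trans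
              subset_union_left)
      have hcard : (S ∪ e).card + (S ∩ e).card = S.card + e.card :=
        card_union_add_card_inter S e
      have hSe : 1 ≤ (S ∩ e).card := card_pos.mpr (by
        obtain ⟨x, hx⟩ := heA
        exact ⟨x, mem_inter.mpr ⟨(mem_inter.mp hx).2, (mem_inter.mp hx).1⟩⟩)
      have hsum : (e.card - 1) + ∑ x ∈ F.erase e, (x.card - 1) = ∑ x ∈ F, (x.card - 1) :=
        Finset.add_sum_erase F (fun x => x.card - 1) heF
      have hecard : 1 ≤ e.card := by
        obtain ⟨x, hx⟩ := heA
        exact card_pos.mpr ⟨x, (mem_inter.mp hx).1⟩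
      omega

lemma span_count (Y : Finset β) (E : Finset (Finset β)) (hE : ∀ e ∈ E, e ⊆ Y)
    (hcross : ∀ A : Finset β, A ⊆ Y → A.Nonempty → A ≠ Y →
      ∃ e ∈ E, (e ∩ A).Nonempty ∧ (e \ A).Nonempty) :
    Y.card ≤ 1 + ∑ e ∈ E, (e.card - 1) := by
  rcases Y.eq_empty_or_nonempty with h | ⟨y, hy⟩
  · simp [h]
  · have := span_aux Y E hE hcross E {y} (singleton_nonempty y)
      (singleton_subset_iff.mpr hy) (fun e he hne => absurd he hne)
    simpa using this



variable {n : ℕ}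

lemma cross_part (k₂ r : ℕ) (hkr : k₂ + 2 ≤ r)
    (𝓗 : Finset (Finset (Fin n))) (hcard : ∀ H ∈ 𝓗, H.card = r)
    (hcross : CrossesAllPartitions 𝓗 (k₂ + 2))
    (S : Finset (Fin n)) (hScard : S.card = k₂)
    (A : Finset (Fin n)) (hAY : A ⊆ univ \ S) (hAne : A.Nonempty)
    (hAneY : A ≠ univ \ S) :
    ∃ H ∈ 𝓗, S ⊆ H ∧ ((H \ S) ∩ A).Nonempty ∧ ((H \ S) \ A).Nonempty := by
  set Y : Finset (Fin n) := univ \ S with hY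
  set B : Finset (Fin n) := Y \ A with hB
  have hBne : B.Nonempty := sdiff_nonempty.mpr (fun h => hAneY (Subset.antisymm hAY h))
  have hAS : ∀ x ∈ A, x ∉ S := fun x hx => (mem_sdiff.mp (hAY hx)).2
  have hBS : ∀ x ∈ B, x ∉ S := fun x hx => (mem_sdiff.mp (mem_sdiff.mp hx).1).2
  have hBA : ∀ x ∈ B, x ∉ A := fun x hx => (mem_sdiff.mp hx).2
  set parts : Finset (Finset (Fin n)) :=
    (S.image fun s => ({s} : Finset (Fin n))) ∪ {A, B} with hparts
  have hmem : ∀ c, c ∈ parts ↔ (∃ s ∈ S, ({s} : Finset (Fin n)) = c) ∨ c = A ∨ c = B := by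
    intro c
    simp only [hparts, mem_union, mem_image, mem_insert, mem_singleton]
  have hAnotsing : ∀ s ∈ S, ({s} : Finset (Fin n)) ≠ A := by
    intro s hs h
    exact hAS s (h ▸ mem_singleton_self s) hs
  have hBnotsing : ∀ s ∈ S, ({s} : Finset (Fin n)) ≠ B := by
    intro s hs h
    exact hBS s (h ▸ mem_singleton_self s) hs
  have hAB : A ≠ B := by
    obtain ⟨x, hx⟩ := hAne
    exact fun h => hBA x (h ▸ hx) hx
  have hdisjAB : Disjoint A B := disjoint_sdiff
  have hdisj : ∀ c₁ ∈ parts, ∀ c₂ ∈ parts, c₁ ≠ c₂ → Disjoint c₁ c₂ := by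
    intro c₁ h₁ c₂ h₂ hne
    rcases (hmem c₁).mp h₁ with ⟨s, hs, rfl⟩ | rfl | rfl <;>
      rcases (hmem c₂).mp h₂ with ⟨t, ht, rfl⟩ | rfl | rfl
    · exact Finset.disjoint_singleton.mpr (fun h => hne (by rw [h]))
    · exact disjoint_singleton_left.mpr (fun h => hAS s h hs)
    · exact disjoint_singleton_left.mpr (fun h => hBS s h hs)
    · exact (disjoint_singleton_left.mpr (fun h => hAS t h ht)).symm
    · exact absurd rfl hne
    · exact hdisjAB
    · exact (disjoint_singleton_left.mpr (fun h => hBS t h ht)).symm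
    · exact hdisjAB.symm
    · exact absurd rfl hne
  have hsup : parts.sup id = univ := by
    apply Finset.Subset.antisymm (subset_univ _)
    intro x _
    rw [Finset.mem_sup]
    by_cases hxS : x ∈ S
    · exact ⟨{x}, (hmem _).mpr (Or.inl ⟨x, hxS, rfl⟩), mem_singleton_self x⟩
    · by_cases hxA : x ∈ A
      · exact ⟨A, (hmem _).mpr (Or.inr (Or.inl rfl)), hxA⟩
      · exact ⟨B, (hmem _).mpr (Or.inr (Or.inr rfl)),
          mem_sdiff.mpr ⟨mem_sdiff.mpr ⟨mem_univ x, hxS⟩, hxA⟩⟩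
  have hnotbot : ⊥ ∉ parts := by
    intro h
    rcases (hmem _).mp h with ⟨s, _, hsb⟩ | hb | hb
    · exact (singleton_ne_empty s) (by simpa using hsb)
    · exact hAne.ne_empty hb.symm
    · exact hBne.ne_empty hb.symm
  set P : Finpartition (univ : Finset (Fin n)) :=
    ⟨parts, Finset.supIndep_iff_pairwiseDisjoint.mpr
      (fun c₁ h₁ c₂ h₂ hne => hdisj c₁ h₁ c₂ h₂ hne), hsup, hnotbot⟩ with hP
  have hpcard : parts.card = k₂ + 2 := by
    rw [hparts, card_union_of_disjoint, card_image_of_injective _ Finset.singleton_injective,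
      hScard]
    · have : A ∉ ({B} : Finset (Finset (Fin n))) := by simpa using hAB
      rw [card_insert_of_notMem this, card_singleton]
    · rw [Finset.disjoint_left]
      rintro c hc
      obtain ⟨s, hs, rfl⟩ := mem_image.mp hc
      simp only [mem_insert, mem_singleton]
      push_neg
      exact ⟨hAnotsing s hs, hBnotsing s hs⟩
  obtain ⟨H, hH𝓗, hHc⟩ := hcross P hpcard
  have hHr : H.card = r := hcard H hH𝓗
  have hfilter : P.parts.filter (fun c => (c ∩ H).Nonempty) = P.parts := by
    apply Finset.eq_of_subset_of_card_le (filter_subset _ _)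
    unfold Crosses at hHc
    rw [hHc, hHr]
    have : P.parts.card = k₂ + 2 := hpcard
    rw [this, min_eq_right hkr]
  have hmeet : ∀ c ∈ parts, (c ∩ H).Nonempty := by
    intro c hc
    have : c ∈ P.parts.filter (fun c => (c ∩ H).Nonempty) := by rw [hfilter]; exact hc
    exact (mem_filter.mp this).2
  have hSH : S ⊆ H := by
    intro s hs
    obtain ⟨x, hx⟩ := hmeet {s} ((hmem _).mpr (Or.inl ⟨s, hs, rfl⟩))
    obtain ⟨hx1, hx2⟩ := mem_inter.mp hx
    rwa [mem_singleton.mp hx1] at hx2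
  refine ⟨H, hH𝓗, hSH, ?_, ?_⟩
  · obtain ⟨x, hx⟩ := hmeet A ((hmem _).mpr (Or.inr (Or.inl rfl)))
    obtain ⟨hx1, hx2⟩ := mem_inter.mp hx
    exact ⟨x, mem_inter.mpr ⟨mem_sdiff.mpr ⟨hx2, hAS x hx1⟩, hx1⟩⟩
  · obtain ⟨x, hx⟩ := hmeet B ((hmem _).mpr (Or.inr (Or.inr rfl)))
    obtain ⟨hx1, hx2⟩ := mem_inter.mp hx
    exact ⟨x, mem_sdiff.mpr ⟨mem_sdiff.mpr ⟨hx2, hBS x hx1⟩, hBA x hx1⟩⟩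



lemma main_bound (k₂ r : ℕ) (hkr : k₂ + 2 ≤ r) (hrn : r ≤ n)
    (𝓗 : Finset (Finset (Fin n))) (hcard : ∀ H ∈ 𝓗, H.card = r)
    (hcross : CrossesAllPartitions 𝓗 (k₂ + 2)) :
    n.choose k₂ * (n - k₂ - 1) ≤ 𝓗.card * (r.choose k₂ * (r - k₂ - 1)) := by
  have perS : ∀ S ∈ powersetCard k₂ (univ : Finset (Fin n)),
      n - k₂ ≤ 1 + (𝓗.filter fun H => S ⊆ H).card * (r - k₂ - 1) := by
    intro S hS
    obtain ⟨hSu, hScard⟩ := mem_powersetCard.mp hS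
    set Y := (univ : Finset (Fin n)) \ S with hYdef
    set E := (𝓗.filter fun H => S ⊆ H).image (fun H => H \ S) with hEdef
    have hEY : ∀ e ∈ E, e ⊆ Y := by
      intro e he
      obtain ⟨H, hH, rfl⟩ := mem_image.mp he
      exact sdiff_subset_sdiff (subset_univ H) Subset.rfl
    have hc : ∀ A : Finset (Fin n), A ⊆ Y → A.Nonempty → A ≠ Y →
        ∃ e ∈ E, (e ∩ A).Nonempty ∧ (e \ A).Nonempty := by
      intro A hAY hAne hAneY
      obtain ⟨H, hH, hSH, h1, h2⟩ :=
        cross_part k₂ r hkr 𝓗 hcard hcross S hScard A hAY hAne hAneY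
      exact ⟨H \ S, mem_image_of_mem _ (mem_filter.mpr ⟨hH, hSH⟩), h1, h2⟩
    have hspan := span_count Y E hEY hc
    have hYcard : Y.card = n - k₂ := by
      rw [hYdef, card_sdiff_of_subset (subset_univ S), hScard, card_univ, Fintype.card_fin]
    have hsum : ∑ e ∈ E, (e.card - 1) ≤ (𝓗.filter fun H => S ⊆ H).card * (r - k₂ - 1) := by
      have hconst : ∀ e ∈ E, e.card - 1 = r - k₂ - 1 := by
        intro e he
        obtain ⟨H, hH, rfl⟩ := mem_image.mp he
        obtain ⟨hH𝓗, hSH⟩ := mem_filter.mp hH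
        rw [card_sdiff_of_subset hSH, hScard, hcard H hH𝓗]
      rw [Finset.sum_congr rfl hconst, sum_const, smul_eq_mul]
      exact Nat.mul_le_mul_right _ card_image_le
    omega
  have hdouble : ∑ S ∈ powersetCard k₂ (univ : Finset (Fin n)),
      (𝓗.filter fun H => S ⊆ H).card = 𝓗.card * r.choose k₂ := by
    have h1 : ∀ S : Finset (Fin n), (𝓗.filter fun H => S ⊆ H).card
        = ∑ H ∈ 𝓗, if S ⊆ H then 1 else 0 := fun S => Finset.card_filter _ _
    simp_rw [h1]
    rw [Finset.sum_comm]
    have h2 : ∀ H ∈ 𝓗, (∑ S ∈ powersetCard k₂ (univ : Finset (Fin n)),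
        if S ⊆ H then 1 else 0) = r.choose k₂ := by
      intro H hH
      rw [← Finset.card_filter]
      have heq : (powersetCard k₂ (univ : Finset (Fin n))).filter (fun S => S ⊆ H)
          = H.powersetCard k₂ := by
        ext S
        simp only [mem_filter, mem_powersetCard, subset_univ, true_and]
        tauto
      rw [heq, card_powersetCard, hcard H hH]
    rw [Finset.sum_congr rfl h2, sum_const, smul_eq_mul]
  have hsum1 := Finset.sum_le_sum perS
  rw [sum_const, smul_eq_mul, Finset.sum_add_distrib, sum_const, smul_eq_mul,
    ← Finset.sum_mul, hdouble] at hsum1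
  have hpc : (powersetCard k₂ (univ : Finset (Fin n))).card = n.choose k₂ := by
    rw [card_powersetCard, card_univ, Fintype.card_fin]
  rw [hpc] at hsum1
  have h2n : 2 ≤ n - k₂ := by omega
  have expand : n.choose k₂ * (n - k₂) = n.choose k₂ * (n - k₂ - 1) + n.choose k₂ := by
    obtain ⟨a, ha⟩ : ∃ a, n - k₂ = a + 1 := ⟨n - k₂ - 1, by omega⟩
    rw [ha]
    simp [Nat.mul_succ]
  rw [expand, mul_one] at hsum1
  rw [← mul_assoc]
  linarith [hsum1]

lemma full_crosses {n k r : ℕ} (hk : 0 < k) (hkr : k ≤ r) (hrn : r ≤ n) :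
    CrossesAllPartitions (powersetCard r (univ : Finset (Fin n))) k := by
  intro P hP
  have hn0 : 0 < n := by omega
  set g : Finset (Fin n) → Fin n :=
    fun c => if h : c.Nonempty then c.min' h else ⟨0, hn0⟩ with hg
  have hgmem : ∀ c ∈ P.parts, g c ∈ c := by
    intro c hc
    have hcne : c.Nonempty := P.nonempty_of_mem_parts hc
    rw [hg]
    simp only [dif_pos hcne]
    exact min'_mem _ _
  set T := P.parts.image g with hT
  have hTcard : T.card = k := by
    rw [hT, card_image_of_injOn, hP]
    intro c1 h1 c2 h2 heq
    by_contra hne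
    have hd := P.disjoint h1 h2 hne
    exact (Finset.disjoint_left.mp hd (hgmem c1 h1)) (heq ▸ hgmem c2 h2)
  obtain ⟨H, hTH, hHuniv, hHcard⟩ := exists_subsuperset_card_eq (n := r) (subset_univ T)
    (hTcard ▸ hkr) (by rw [card_univ, Fintype.card_fin]; exact hrn)
  refine ⟨H, mem_powersetCard.mpr ⟨hHuniv, hHcard⟩, ?_⟩
  unfold Crosses
  rw [hHcard, hP, min_eq_right hkr, filter_true_of_mem, hP]
  intro c hc
  exact ⟨g c, mem_inter.mpr ⟨hgmem c hc, hTH (mem_image_of_mem g hc)⟩⟩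


end Lemmas

theorem stmt6 (n k r : ℕ) (hk : 2 ≤ k) (hkr : k ≤ r) (hrn : r ≤ n) :
    (f n k r : ℚ) ≥ (n.choose k : ℚ) / (r.choose k : ℚ) *
      (((r : ℚ) - k + 2) / ((n : ℚ) - k + 2)) := by
  obtain ⟨k₂, rfl⟩ : ∃ k₂, k = k₂ + 2 := ⟨k - 2, by omega⟩
  obtain ⟨b₁, rfl⟩ : ∃ b₁, r = k₂ + 2 + b₁ := ⟨r - (k₂ + 2), by omega⟩
  obtain ⟨a₁, rfl⟩ : ∃ a₁, n = k₂ + 2 + a₁ := ⟨n - (k₂ + 2), by omega⟩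
  set k := k₂ + 2 with hkdef
  set r := k + b₁ with hrdef
  set n := k + a₁ with hndef
  have hab : b₁ ≤ a₁ := by omega
  -- f is attained
  have hne : { m | ∃ 𝓗 : Finset (Finset (Fin n)),
      (∀ H ∈ 𝓗, H.card = r) ∧ CrossesAllPartitions 𝓗 k ∧ 𝓗.card = m }.Nonempty := by
    refine ⟨(powersetCard r (univ : Finset (Fin n))).card,
      powersetCard r (univ : Finset (Fin n)),
      fun H hH => (mem_powersetCard.mp hH).2, ?_, rfl⟩
    exact full_crosses (by omega) (by omega) (by omega)
  obtain ⟨𝓗, hu, hc, hcard⟩ := Nat.sInf_mem hne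
  have hfval : f n k r = 𝓗.card := hcard.symm
  rw [hfval]
  have hmain := main_bound k₂ r (by omega) (by omega) 𝓗 hu hc
  -- identities
  have idn : n.choose k * ((k₂ + 2) * (k₂ + 1)) = n.choose k₂ * ((a₁ + 2) * (a₁ + 1)) := by
    have e1 := Nat.choose_succ_right_eq n k₂
    have e2 := Nat.choose_succ_right_eq n (k₂ + 1)
    have h1 : n - k₂ = a₁ + 2 := by omega
    have h2 : n - (k₂ + 1) = a₁ + 1 := by omega
    rw [h1] at e1; rw [h2] at e2
    calc n.choose k * ((k₂ + 2) * (k₂ + 1))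
        = (n.choose (k₂ + 1 + 1) * (k₂ + 1 + 1)) * (k₂ + 1) := by rw [hkdef]; ring
      _ = (n.choose (k₂ + 1) * (a₁ + 1)) * (k₂ + 1) := by rw [e2]
      _ = (n.choose (k₂ + 1) * (k₂ + 1)) * (a₁ + 1) := by ring
      _ = (n.choose k₂ * (a₁ + 2)) * (a₁ + 1) := by rw [e1]
      _ = n.choose k₂ * ((a₁ + 2) * (a₁ + 1)) := by ring
  have idr : r.choose k * ((k₂ + 2) * (k₂ + 1)) = r.choose k₂ * ((b₁ + 2) * (b₁ + 1)) := by
    have e1 := Nat.choose_succ_right_eq r k₂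
    have e2 := Nat.choose_succ_right_eq r (k₂ + 1)
    have h1 : r - k₂ = b₁ + 2 := by omega
    have h2 : r - (k₂ + 1) = b₁ + 1 := by omega
    rw [h1] at e1; rw [h2] at e2
    calc r.choose k * ((k₂ + 2) * (k₂ + 1))
        = (r.choose (k₂ + 1 + 1) * (k₂ + 1 + 1)) * (k₂ + 1) := by rw [hkdef]; ring
      _ = (r.choose (k₂ + 1) * (b₁ + 1)) * (k₂ + 1) := by rw [e2]
      _ = (r.choose (k₂ + 1) * (k₂ + 1)) * (b₁ + 1) := by ring
      _ = (r.choose k₂ * (b₁ + 2)) * (b₁ + 1) := by rw [e1]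
      _ = r.choose k₂ * ((b₁ + 2) * (b₁ + 1)) := by ring
  have hmain' : n.choose k₂ * (a₁ + 1) ≤ 𝓗.card * (r.choose k₂ * (b₁ + 1)) := by
    have h1 : n - k₂ - 1 = a₁ + 1 := by omega
    have h2 : r - k₂ - 1 = b₁ + 1 := by omega
    rwa [h1, h2] at hmain
  -- cast to ℚ
  have hre : ((r : ℚ) - (k : ℕ) + 2) = ((b₁ + 2 : ℕ) : ℚ) := by
    rw [hrdef, hkdef]; push_cast; ring
  have hnre : ((n : ℚ) - (k : ℕ) + 2) = ((a₁ + 2 : ℕ) : ℚ) := by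
    rw [hndef, hkdef]; push_cast; ring
  have hCr : (0 : ℚ) < (r.choose k : ℚ) := by
    exact_mod_cast Nat.choose_pos (show k ≤ r by omega)
  have hA2 : (0 : ℚ) < ((a₁ + 2 : ℕ) : ℚ) := by positivity
  rw [ge_iff_le, hre, hnre, div_mul_div_comm, div_le_iff₀ (mul_pos hCr hA2)]
  have hQmain : (n.choose k₂ : ℚ) * (a₁ + 1) ≤ (𝓗.card : ℚ) * ((r.choose k₂ : ℚ) * (b₁ + 1)) := by
    exact_mod_cast hmain'
  have hQidn : (n.choose k : ℚ) * ((k₂ + 2) * (k₂ + 1))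
      = (n.choose k₂ : ℚ) * ((a₁ + 2) * (a₁ + 1)) := by exact_mod_cast idn
  have hQidr : (r.choose k : ℚ) * ((k₂ + 2) * (k₂ + 1))
      = (r.choose k₂ : ℚ) * ((b₁ + 2) * (b₁ + 1)) := by exact_mod_cast idr
  have hK : (0 : ℚ) < ((k₂ + 2) * (k₂ + 1) : ℚ) := by positivity
  have hBp : (0 : ℚ) < ((b₁ : ℚ) + 1) := by positivity
  rw [show ((b₁ + 2 : ℕ) : ℚ) = ((b₁ : ℚ) + 2) by push_cast; ring,
    show ((a₁ + 2 : ℕ) : ℚ) = ((a₁ : ℚ) + 2) by push_cast; ring]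
  have key : ((n.choose k : ℚ) * ((b₁ : ℚ) + 2)) * (((k₂ + 2) * (k₂ + 1) : ℚ) * ((b₁ : ℚ) + 1))
      ≤ ((𝓗.card : ℚ) * ((r.choose k : ℚ) * ((a₁ : ℚ) + 2)))
        * (((k₂ + 2) * (k₂ + 1) : ℚ) * ((b₁ : ℚ) + 1)) := by
    calc ((n.choose k : ℚ) * ((b₁ : ℚ) + 2)) * (((k₂ + 2) * (k₂ + 1) : ℚ) * ((b₁ : ℚ) + 1))
        = ((n.choose k : ℚ) * (((k₂ : ℚ) + 2) * ((k₂ : ℚ) + 1)))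
            * (((b₁ : ℚ) + 2) * ((b₁ : ℚ) + 1)) := by ring
      _ = ((n.choose k₂ : ℚ) * (((a₁ : ℚ) + 2) * ((a₁ : ℚ) + 1)))
            * (((b₁ : ℚ) + 2) * ((b₁ : ℚ) + 1)) := by rw [hQidn]
      _ = ((n.choose k₂ : ℚ) * ((a₁ : ℚ) + 1))
            * (((a₁ : ℚ) + 2) * (((b₁ : ℚ) + 2) * ((b₁ : ℚ) + 1))) := by ring
      _ ≤ ((𝓗.card : ℚ) * ((r.choose k₂ : ℚ) * ((b₁ : ℚ) + 1)))
            * (((a₁ : ℚ) + 2) * (((b₁ : ℚ) + 2) * ((b₁ : ℚ) + 1))) := by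
              exact mul_le_mul_of_nonneg_right hQmain (by positivity)
      _ = ((𝓗.card : ℚ) * ((r.choose k₂ : ℚ) * (((b₁ : ℚ) + 2) * ((b₁ : ℚ) + 1))))
            * (((a₁ : ℚ) + 2) * ((b₁ : ℚ) + 1)) := by ring
      _ = ((𝓗.card : ℚ) * ((r.choose k : ℚ) * (((k₂ : ℚ) + 2) * ((k₂ : ℚ) + 1))))
            * (((a₁ : ℚ) + 2) * ((b₁ : ℚ) + 1)) := by rw [hQidr]
      _ = ((𝓗.card : ℚ) * ((r.choose k : ℚ) * ((a₁ : ℚ) + 2)))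
            * (((k₂ + 2) * (k₂ + 1) : ℚ) * ((b₁ : ℚ) + 1)) := by ring
  exact le_of_mul_le_mul_right key (by positivity)
end

section
/- For all integers n, k, r, r' with n ≥ r ≥ r' ≥ k ≥ 2, f(n,k,r) ≥ f(n,k,r') / f(r,k,r'). -/
open Finset

section Aux

variable {α : Type*} [Fintype α] [DecidableEq α]

lemma exists_crossing_set (k r : ℕ) (hk : 1 ≤ k) (hkr : k ≤ r) (hr : r ≤ Fintype.card α)
    (P : Finpartition (univ : Finset α)) (hP : P.parts.card = k) :
    ∃ H : Finset α, H.card = r ∧ Crosses H P := by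
  classical
  have hα : Nonempty α := Fintype.card_pos_iff.mp (by omega)
  set pick : Finset α → α := fun c =>
    if h : c.Nonempty then h.choose else Classical.arbitrary α with hpick
  have hmem : ∀ c ∈ P.parts, pick c ∈ c := by
    intro c hc
    have h : c.Nonempty := P.nonempty_of_mem_parts hc
    simpa [hpick, dif_pos h] using h.choose_spec
  set S : Finset α := P.parts.image pick with hS
  have hScard : S.card = k := by
    rw [hS, Finset.card_image_of_injOn, hP]
    intro c hc c' hc' h
    exact P.eq_of_mem_parts hc hc' (hmem c hc) (by rw [h]; exact hmem c' hc')
  have hSsub : S ⊆ univ := Finset.subset_univ S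
  obtain ⟨H, hSH, hHuniv, hHcard⟩ :=
    Finset.exists_subsuperset_card_eq (n := r) hSsub (by rw [hScard]; exact hkr)
      (by rwa [Finset.card_univ])
  refine ⟨H, hHcard, ?_⟩
  unfold Crosses
  have hfilter : P.parts.filter (fun c => (c ∩ H).Nonempty) = P.parts := by
    apply Finset.filter_true_of_mem
    intro c hc
    exact ⟨pick c, Finset.mem_inter.mpr ⟨hmem c hc, hSH (Finset.mem_image_of_mem _ hc)⟩⟩
  rw [hfilter, hHcard, hP]
  omega

lemma f_spec (n k r : ℕ) (hk : 1 ≤ k) (hkr : k ≤ r) (hrn : r ≤ n) :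
    ∃ 𝓗 : Finset (Finset (Fin n)),
      (∀ H ∈ 𝓗, H.card = r) ∧ CrossesAllPartitions 𝓗 k ∧ 𝓗.card = f n k r := by
  classical
  have hne : { m | ∃ 𝓗 : Finset (Finset (Fin n)),
      (∀ H ∈ 𝓗, H.card = r) ∧ CrossesAllPartitions 𝓗 k ∧ 𝓗.card = m }.Nonempty := by
    refine ⟨((univ : Finset (Fin n)).powersetCard r).card,
      (univ : Finset (Fin n)).powersetCard r, ?_, ?_, rfl⟩
    · intro H hH
      exact (Finset.mem_powersetCard.mp hH).2
    · intro P hP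
      obtain ⟨H, hHcard, hHcross⟩ := exists_crossing_set k r hk hkr
        (by simp only [Fintype.card_fin]; exact hrn) P hP
      exact ⟨H, Finset.mem_powersetCard.mpr ⟨Finset.subset_univ H, hHcard⟩, hHcross⟩
  obtain ⟨𝓗, h1, h2, h3⟩ := Nat.sInf_mem hne
  exact ⟨𝓗, h1, h2, h3⟩

end Aux

lemma key_ineq (n k r r' : ℕ) (hk : 2 ≤ k) (hkr' : k ≤ r') (hr'r : r' ≤ r) (hrn : r ≤ n) :
    f n k r' ≤ f n k r * f r k r' := by
  classical
  obtain ⟨𝓗, h𝓗unif, h𝓗cross, h𝓗card⟩ := f_spec n k r (by omega) (by omega) hrn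
  obtain ⟨𝓖, h𝓖unif, h𝓖cross, h𝓖card⟩ := f_spec r k r' (by omega) hkr' hr'r
  -- for each edge H of 𝓗, plant a copy of 𝓖 inside H
  set T : Finset (Fin n) → Finset (Finset (Fin n)) := fun H =>
    if h : H.card = r then
      𝓖.image (fun G => G.image (fun i => ((H.equivFinOfCardEq h).symm i : Fin n)))
    else ∅ with hT
  set 𝓚 : Finset (Finset (Fin n)) := 𝓗.biUnion T with h𝓚
  -- cardinality bound
  have hTcard : ∀ H, (T H).card ≤ 𝓖.card := by
    intro H
    rw [hT]
    by_cases h : H.card = r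
    · simp only [dif_pos h]
      exact Finset.card_image_le
    · simp [dif_neg h]
  have h𝓚card : 𝓚.card ≤ f n k r * f r k r' := by
    calc 𝓚.card ≤ ∑ H ∈ 𝓗, (T H).card := Finset.card_biUnion_le
      _ ≤ ∑ _H ∈ 𝓗, 𝓖.card := Finset.sum_le_sum fun H _ => hTcard H
      _ = 𝓗.card * 𝓖.card := by rw [Finset.sum_const, smul_eq_mul]
      _ = f n k r * f r k r' := by rw [h𝓗card, h𝓖card]
  -- uniformity
  have h𝓚unif : ∀ K ∈ 𝓚, K.card = r' := by
    intro K hK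
    rw [h𝓚, Finset.mem_biUnion] at hK
    obtain ⟨H, hH, hKT⟩ := hK
    have hHr : H.card = r := h𝓗unif H hH
    rw [hT] at hKT
    simp only [dif_pos hHr, Finset.mem_image] at hKT
    obtain ⟨G, hG, rfl⟩ := hKT
    rw [Finset.card_image_of_injective _
      (fun i j hij => (H.equivFinOfCardEq hHr).symm.injective (Subtype.ext hij))]
    exact h𝓖unif G hG
  -- crossing
  have h𝓚cross : CrossesAllPartitions 𝓚 k := by
    intro P hP
    obtain ⟨H, hH𝓗, hHcross⟩ := h𝓗cross P hP
    have hHr : H.card = r := h𝓗unif H hH𝓗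
    set g : Fin r → Fin n := fun i => ((H.equivFinOfCardEq hHr).symm i : Fin n) with hg
    have hg_inj : Function.Injective g :=
      fun i j hij => (H.equivFinOfCardEq hHr).symm.injective (Subtype.ext hij)
    have hg_mem : ∀ i, g i ∈ H := fun i => ((H.equivFinOfCardEq hHr).symm i).2
    have hg_surj : ∀ x ∈ H, ∃ i, g i = x := by
      intro x hx
      refine ⟨(H.equivFinOfCardEq hHr) ⟨x, hx⟩, ?_⟩
      simp [hg]
    -- H meets every part of P
    have hmin : min H.card P.parts.card = k := by
      rw [hHr, hP, Nat.min_eq_right (by omega)]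
    have hfilterH : P.parts.filter (fun c => (c ∩ H).Nonempty) = P.parts := by
      apply Finset.eq_of_subset_of_card_le (Finset.filter_subset _ _)
      rw [hHcross, hmin, hP]
    have hmeet : ∀ c ∈ P.parts, (c ∩ H).Nonempty := by
      intro c hc
      have := hfilterH ▸ hc
      rw [← hfilterH] at hc
      exact (Finset.mem_filter.mp hc).2
    -- the induced partition on Fin r
    set pt : Finset (Fin n) → Finset (Fin r) := fun c => univ.filter (fun i => g i ∈ c) with hpt
    have hpt_injOn : ∀ c ∈ P.parts, ∀ c' ∈ P.parts, pt c = pt c' → c = c' := by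
      intro c hc c' hc' h
      obtain ⟨x, hx⟩ := hmeet c hc
      rw [Finset.mem_inter] at hx
      obtain ⟨i, rfl⟩ := hg_surj x hx.2
      have hi : i ∈ pt c := by simp [hpt, hx.1]
      have hi' : i ∈ pt c' := h ▸ hi
      rw [hpt] at hi'
      simp only [Finset.mem_filter] at hi'
      exact P.eq_of_mem_parts hc hc' hx.1 hi'.2
    have hQcard : (P.parts.image pt).card = k := by
      rw [Finset.card_image_of_injOn (fun c hc c' hc' h => hpt_injOn c hc c' hc' h), hP]
    set Q : Finpartition (univ : Finset (Fin r)) :=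
      { parts := P.parts.image pt
        supIndep := by
          rw [Finset.supIndep_iff_pairwiseDisjoint]
          intro d hd d' hd' hdd'
          simp only [Finset.coe_image, Set.mem_image, Finset.mem_coe] at hd hd'
          obtain ⟨c, hc, rfl⟩ := hd
          obtain ⟨c', hc', rfl⟩ := hd'
          simp only [Function.onFun, id]
          rw [Finset.disjoint_left]
          intro i hi hi'
          rw [hpt] at hi hi'
          simp only [Finset.mem_filter] at hi hi'
          exact hdd' (congrArg pt (P.eq_of_mem_parts hc hc' hi.2 hi'.2))
        sup_parts := by
          apply Finset.Subset.antisymm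
          · intro i _
            exact Finset.mem_univ i
          · intro i _
            rw [Finset.mem_sup]
            obtain ⟨c, hc, hgc⟩ := P.exists_mem (Finset.mem_univ (g i))
            exact ⟨pt c, Finset.mem_image_of_mem _ hc, by simp [hpt, hgc]⟩
        bot_notMem := by
          simp only [Finset.bot_eq_empty, Finset.mem_image, not_exists, not_and]
          intro c hc h
          obtain ⟨x, hx⟩ := hmeet c hc
          rw [Finset.mem_inter] at hx
          obtain ⟨i, rfl⟩ := hg_surj x hx.2
          have : i ∈ pt c := by simp [hpt, hx.1]
          rw [h] at this
          exact absurd this (Finset.notMem_empty i) } with hQ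
    obtain ⟨G, hG𝓖, hGcross⟩ := h𝓖cross Q (by rw [hQ]; exact hQcard)
    have hGr' : G.card = r' := h𝓖unif G hG𝓖
    -- G meets every part of Q
    have hfilterG : Q.parts.filter (fun d => (d ∩ G).Nonempty) = Q.parts := by
      apply Finset.eq_of_subset_of_card_le (Finset.filter_subset _ _)
      have hQpc : Q.parts.card = k := hQcard
      have hc2 : (Q.parts.filter fun d => (d ∩ G).Nonempty).card
          = min G.card Q.parts.card := hGcross
      rw [hc2, hGr', hQpc]
      omega
    have hGmeet : ∀ c ∈ P.parts, (pt c ∩ G).Nonempty := by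
      intro c hc
      have hd : pt c ∈ Q.parts := by
        rw [hQ]; exact Finset.mem_image_of_mem _ hc
      rw [← hfilterG] at hd
      exact (Finset.mem_filter.mp hd).2
    refine ⟨G.image g, ?_, ?_⟩
    · rw [h𝓚, Finset.mem_biUnion]
      refine ⟨H, hH𝓗, ?_⟩
      rw [hT]
      simp only [dif_pos hHr]
      exact Finset.mem_image_of_mem _ hG𝓖
    · unfold Crosses
      have hfilter' : P.parts.filter (fun c => (c ∩ G.image g).Nonempty) = P.parts := by
        apply Finset.filter_true_of_mem
        intro c hc
        obtain ⟨i, hi⟩ := hGmeet c hc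
        rw [Finset.mem_inter] at hi
        rw [hpt] at hi
        simp only [Finset.mem_filter] at hi
        exact ⟨g i, Finset.mem_inter.mpr ⟨hi.1.2, Finset.mem_image_of_mem _ hi.2⟩⟩
      rw [hfilter', Finset.card_image_of_injective _ hg_inj, hGr', hP]
      omega
  -- conclude
  have : f n k r' ≤ 𝓚.card := Nat.sInf_le ⟨𝓚, h𝓚unif, h𝓚cross, rfl⟩
  omega

theorem stmt8 (n k r r' : ℕ) (hk : 2 ≤ k) (hkr' : k ≤ r') (hr'r : r' ≤ r) (hrn : r ≤ n) :
    (f n k r : ℚ) ≥ (f n k r' : ℚ) / (f r k r' : ℚ) := by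
  by_cases h0 : f r k r' = 0
  · rw [h0]
    simp only [Nat.cast_zero, div_zero, ge_iff_le]
    positivity
  · have hpos : (0 : ℚ) < (f r k r' : ℚ) := by
      exact_mod_cast Nat.pos_of_ne_zero h0
    rw [ge_iff_le, div_le_iff₀ hpos]
    exact_mod_cast key_ineq n k r r' hk hkr' hr'r hrn
end

section
/- For all integers n, k, r with n ≥ r ≥ k ≥ 2, f(n,k,r) ≥ f(n,k,k) / k^{r−k}. -/
open Finset

lemma choose_le_pow_aux (j : ℕ) : ∀ d : ℕ, Nat.choose (j + d) j ≤ (j + 1) ^ d := by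
  intro d
  induction d with
  | zero => simp
  | succ d ih =>
    cases j with
    | zero => simp
    | succ j' =>
      have hpascal : Nat.choose (j' + 1 + (d + 1)) (j' + 1)
          = Nat.choose (j' + 1 + d) j' + Nat.choose (j' + 1 + d) (j' + 1) := by
        rw [show j' + 1 + (d + 1) = (j' + 1 + d) + 1 by ring]
        exact Nat.choose_succ_succ _ _
      have hid : Nat.choose (j' + 1 + d) (j' + 1) * (j' + 1)
          = Nat.choose (j' + 1 + d) j' * (j' + 1 + d - j') :=
        Nat.choose_succ_right_eq _ _
      have h1 : Nat.choose (j' + 1 + d) j' ≤ Nat.choose (j' + 1 + d) (j' + 1) * (j' + 1) := by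
        rw [hid]
        have : j' + 1 + d - j' = d + 1 := by omega
        rw [this]
        nlinarith [Nat.choose (j' + 1 + d) j']
      calc Nat.choose (j' + 1 + (d + 1)) (j' + 1)
          = Nat.choose (j' + 1 + d) j' + Nat.choose (j' + 1 + d) (j' + 1) := hpascal
        _ ≤ Nat.choose (j' + 1 + d) (j' + 1) * (j' + 1) + Nat.choose (j' + 1 + d) (j' + 1) := by
            exact Nat.add_le_add_right h1 _
        _ = Nat.choose (j' + 1 + d) (j' + 1) * (j' + 1 + 1) := by ring
        _ ≤ (j' + 1 + 1) ^ d * (j' + 1 + 1) := Nat.mul_le_mul_right _ ih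
        _ = (j' + 1 + 1) ^ (d + 1) := by ring

/-- The full `j`-uniform hypergraph crosses all `k`-partitions, so the defining set
of `f n k j` is nonempty. -/
lemma f_set_nonempty (n k j : ℕ) (hk : 1 ≤ k) (hkj : k ≤ j) (hjn : j ≤ n) :
    { m | ∃ 𝓗 : Finset (Finset (Fin n)),
      (∀ H ∈ 𝓗, H.card = j) ∧ CrossesAllPartitions 𝓗 k ∧ 𝓗.card = m }.Nonempty := by
  classical
  refine ⟨((univ : Finset (Fin n)).powersetCard j).card,
    (univ : Finset (Fin n)).powersetCard j, ?_, ?_, rfl⟩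
  · intro H hH
    exact (mem_powersetCard.1 hH).2
  · intro P hP
    -- build a transversal T of the parts
    set T : Finset (Fin n) :=
      P.parts.attach.image (fun c => c.1.min' (P.nonempty_of_mem_parts c.2)) with hT
    have hTsub : ∀ c : {x // x ∈ P.parts}, c.1.min' (P.nonempty_of_mem_parts c.2) ∈ c.1 :=
      fun c => Finset.min'_mem _ _
    have hTcard : T.card = k := by
      rw [hT, Finset.card_image_of_injOn, Finset.card_attach, hP]
      intro c _ c' _ hcc'
      simp only at hcc'
      have h1 := hTsub c
      have h2 := hTsub c'
      rw [hcc'] at h1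
      exact Subtype.ext (P.eq_of_mem_parts c.2 c'.2 h1 h2)
    have hTk : T.card ≤ j := hTcard ▸ hkj
    obtain ⟨H, hTH, _, hHcard⟩ :=
      Finset.exists_subsuperset_card_eq (Finset.subset_univ T) hTk
        (by simpa [Finset.card_univ] using hjn)
    refine ⟨H, Finset.mem_powersetCard_univ.2 hHcard, ?_⟩
    unfold Crosses
    rw [hHcard, hP, min_eq_right hkj]
    have : P.parts.filter (fun c => (c ∩ H).Nonempty) = P.parts := by
      apply Finset.filter_true_of_mem
      intro c hc
      refine ⟨c.min' (P.nonempty_of_mem_parts hc), Finset.mem_inter.2 ⟨Finset.min'_mem _ _, ?_⟩⟩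
      exact hTH (Finset.mem_image.2 ⟨⟨c, hc⟩, Finset.mem_attach _ _, rfl⟩)
    rw [this, hP]

theorem stmt9 (n k r : ℕ) (hk : 2 ≤ k) (hkr : k ≤ r) (hrn : r ≤ n) :
    (f n k r : ℚ) ≥ (f n k k : ℚ) / (k : ℚ) ^ (r - k) := by
  classical
  have hk1 : 1 ≤ k := by omega
  -- obtain an optimal r-uniform hypergraph 𝓗
  obtain ⟨𝓗, huni, hcross, hcard⟩ :=
    Nat.sInf_mem (f_set_nonempty n k r hk1 hkr hrn)
  have hcard' : 𝓗.card = f n k r := hcard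
  -- the derived k-uniform hypergraph
  set 𝓖 : Finset (Finset (Fin n)) :=
    𝓗.biUnion (fun H => (H.powersetCard k).filter (fun K => K.min = H.min)) with h𝓖
  -- 𝓖 is k-uniform
  have h𝓖uni : ∀ K ∈ 𝓖, K.card = k := by
    intro K hK
    obtain ⟨H, _, hKH⟩ := Finset.mem_biUnion.1 hK
    exact (Finset.mem_powersetCard.1 (Finset.mem_filter.1 hKH).1).2
  -- 𝓖 crosses all k-partitions
  have h𝓖cross : CrossesAllPartitions 𝓖 k := by
    intro P hP
    obtain ⟨H, hH𝓗, hHcr⟩ := hcross P hP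
    have hHcard : H.card = r := huni H hH𝓗
    have hHne : H.Nonempty := Finset.card_pos.1 (by omega)
    set a : Fin n := H.min' hHne with ha
    -- every part meets H
    have hallmeet : ∀ c ∈ P.parts, (c ∩ H).Nonempty := by
      have hfil : P.parts.filter (fun c => (c ∩ H).Nonempty) = P.parts := by
        apply Finset.eq_of_subset_of_card_le (Finset.filter_subset _ _)
        unfold Crosses at hHcr
        rw [hHcr, hHcard, hP, min_eq_right hkr]
      intro c hc
      have := hfil ▸ hc
      exact (Finset.mem_filter.1 this).2
    -- representative map
    set rep : {x // x ∈ P.parts} → Fin n :=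
      fun c => if h : a ∈ c.1 then a else (c.1 ∩ H).min' (hallmeet c.1 c.2) with hrep
    have hrepmem : ∀ c : {x // x ∈ P.parts}, rep c ∈ c.1 ∩ H := by
      intro c
      rw [hrep]
      dsimp only
      split
      · exact Finset.mem_inter.2 ⟨‹a ∈ c.1›, Finset.min'_mem _ _⟩
      · exact Finset.min'_mem _ _
    set K : Finset (Fin n) := P.parts.attach.image rep with hK
    have hKsubH : K ⊆ H := by
      intro x hx
      obtain ⟨c, _, hc⟩ := Finset.mem_image.1 hx
      exact hc ▸ (Finset.mem_inter.1 (hrepmem c)).2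
    have hKcard : K.card = k := by
      rw [hK, Finset.card_image_of_injOn, Finset.card_attach, hP]
      intro c _ c' _ hcc'
      have h1 := (Finset.mem_inter.1 (hrepmem c)).1
      have h2 := (Finset.mem_inter.1 (hrepmem c')).1
      rw [hcc'] at h1
      exact Subtype.ext (P.eq_of_mem_parts c.2 c'.2 h1 h2)
    have haK : a ∈ K := by
      obtain ⟨c₀, hc₀, hac₀⟩ := P.exists_mem (Finset.mem_univ a)
      have : rep ⟨c₀, hc₀⟩ = a := by rw [hrep]; exact dif_pos hac₀
      exact Finset.mem_image.2 ⟨⟨c₀, hc₀⟩, Finset.mem_attach _ _, this⟩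
    have hKne : K.Nonempty := ⟨a, haK⟩
    have hminK : K.min = H.min := by
      apply le_antisymm
      · calc K.min ≤ (a : WithTop (Fin n)) := Finset.min_le haK
          _ = H.min := Finset.coe_min' hHne
      · exact Finset.min_mono hKsubH
    have hK𝓖 : K ∈ 𝓖 := by
      rw [h𝓖]
      exact Finset.mem_biUnion.2 ⟨H, hH𝓗, Finset.mem_filter.2
        ⟨Finset.mem_powersetCard.2 ⟨hKsubH, hKcard⟩, hminK⟩⟩
    refine ⟨K, hK𝓖, ?_⟩
    unfold Crosses
    rw [hKcard, hP, min_self]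
    have : P.parts.filter (fun c => (c ∩ K).Nonempty) = P.parts := by
      apply Finset.filter_true_of_mem
      intro c hc
      refine ⟨rep ⟨c, hc⟩, Finset.mem_inter.2 ⟨(Finset.mem_inter.1 (hrepmem ⟨c, hc⟩)).1, ?_⟩⟩
      exact Finset.mem_image.2 ⟨⟨c, hc⟩, Finset.mem_attach _ _, rfl⟩
    rw [this, hP]
  -- cardinality bound for 𝓖
  have h𝓖card : 𝓖.card ≤ f n k r * k ^ (r - k) := by
    calc 𝓖.card ≤ ∑ H ∈ 𝓗, ((H.powersetCard k).filter (fun K => K.min = H.min)).card :=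
          Finset.card_biUnion_le
      _ ≤ ∑ _H ∈ 𝓗, k ^ (r - k) := by
          apply Finset.sum_le_sum
          intro H hH
          have hHcard : H.card = r := huni H hH
          have hHne : H.Nonempty := Finset.card_pos.1 (by omega)
          set a : Fin n := H.min' hHne with ha
          have step1 : ((H.powersetCard k).filter (fun K => K.min = H.min)).card
              ≤ ((H.erase a).powersetCard (k - 1)).card := by
            apply Finset.card_le_card_of_injOn (fun K => K.erase a)
            · intro K hK
              obtain ⟨h1, h2⟩ := Finset.mem_filter.1 hK
              obtain ⟨hKH, hKcard⟩ := Finset.mem_powersetCard.1 h1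
              have haK : a ∈ K := by
                apply Finset.mem_of_min
                rw [h2, ha, Finset.coe_min' hHne]
              exact Finset.mem_powersetCard.2
                ⟨Finset.erase_subset_erase a hKH,
                 by rw [Finset.card_erase_of_mem haK, hKcard]⟩
            · intro K1 hK1 K2 hK2 hE
              have haK1 : a ∈ K1 := by
                obtain ⟨_, h2⟩ := Finset.mem_filter.1 hK1
                apply Finset.mem_of_min; rw [h2, ha, Finset.coe_min' hHne]
              have haK2 : a ∈ K2 := by
                obtain ⟨_, h2⟩ := Finset.mem_filter.1 hK2
                apply Finset.mem_of_min; rw [h2, ha, Finset.coe_min' hHne]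
              have : insert a (K1.erase a) = insert a (K2.erase a) := by rw [show K1.erase a = K2.erase a from hE]
              rwa [Finset.insert_erase haK1, Finset.insert_erase haK2] at this
          have step2 : ((H.erase a).powersetCard (k - 1)).card = Nat.choose (r - 1) (k - 1) := by
            rw [Finset.card_powersetCard, Finset.card_erase_of_mem (Finset.min'_mem _ _), hHcard]
          have step3 : Nat.choose (r - 1) (k - 1) ≤ k ^ (r - k) := by
            have := choose_le_pow_aux (k - 1) (r - k)
            have e1 : k - 1 + (r - k) = r - 1 := by omega
            have e2 : k - 1 + 1 = k := by omega
            rwa [e1, e2] at this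
          omega
      _ = 𝓗.card * k ^ (r - k) := by rw [Finset.sum_const, smul_eq_mul]
      _ = f n k r * k ^ (r - k) := by rw [hcard']
  -- f n k k ≤ 𝓖.card
  have hfkk : f n k k ≤ 𝓖.card := Nat.sInf_le ⟨𝓖, h𝓖uni, h𝓖cross, rfl⟩
  have hfinal : f n k k ≤ f n k r * k ^ (r - k) := le_trans hfkk h𝓖card
  -- conclude over ℚ
  have hkpos : (0 : ℚ) < (k : ℚ) ^ (r - k) := by positivity
  rw [ge_iff_le, div_le_iff₀ hkpos]
  exact_mod_cast hfinal
end

section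
/- For every fixed integer s ≥ 2, f(n, n−s, n−s) = C(n,s) + o(n^s) as n → ∞; that is, (f(n, n−s, n−s) − C(n,s)) / n^s tends to 0 as n → ∞. Here C(n,s) denotes the binomial coefficient. -/
open Finset

section BoxDef

variable {n : ℕ}

/-- A box for a family of `s`-sets: `s` pairwise disjoint pairs all of whose
transversals are members of the family. -/
def IsBox (s : ℕ) (𝓣 : Finset (Finset (Fin n))) (P : Fin s → Finset (Fin n)) : Prop :=
  (∀ i, (P i).card = 2) ∧ (∀ i j, i ≠ j → Disjoint (P i) (P j)) ∧
    ∀ S : Finset (Fin n), S ⊆ univ.biUnion P → (∀ i, (S ∩ P i).card = 1) → S ∈ 𝓣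

lemma exists_transversal {s : ℕ} (Q : Fin s → Finset (Fin n))
    (hne : ∀ i, (Q i).Nonempty) (hd : ∀ i j, i ≠ j → Disjoint (Q i) (Q j))
    (i₀ : Fin s) (a : Fin n) (ha : a ∈ Q i₀) :
    ∃ S : Finset (Fin n), S ⊆ univ.biUnion Q ∧ (∀ i, (S ∩ Q i).card = 1) ∧ a ∈ S := by
  classical
  set c : Fin s → Fin n := fun i => if i = i₀ then a else (Q i).min' (hne i) with hc
  have hcQ : ∀ i, c i ∈ Q i := by
    intro i
    by_cases h : i = i₀
    · subst h; simp [hc, ha]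
    · simp only [hc, if_neg h]; exact (Q i).min'_mem (hne i)
  have hint : ∀ i, (univ.image c) ∩ Q i = {c i} := by
    intro i
    ext z
    simp only [mem_inter, mem_image, mem_univ, true_and, mem_singleton]
    constructor
    · rintro ⟨⟨j, rfl⟩, hz⟩
      by_cases h : j = i
      · subst h; rfl
      · exact absurd (mem_inter.mpr ⟨hcQ j, hz⟩) (by
          rw [Finset.disjoint_iff_inter_eq_empty.mp (hd j i h)]; exact notMem_empty _)
    · rintro rfl
      exact ⟨⟨i, rfl⟩, hcQ i⟩
  refine ⟨univ.image c, ?_, fun i => by rw [hint i]; simp, ?_⟩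
  · intro z hz
    obtain ⟨j, _, rfl⟩ := mem_image.mp hz
    exact mem_biUnion.mpr ⟨j, mem_univ j, hcQ j⟩
  · exact mem_image.mpr ⟨i₀, mem_univ i₀, by simp [hc]⟩

end BoxDef

theorem box_theorem (s : ℕ) : ∀ ε : ℝ, 0 < ε →
    ∃ N : ℕ, ∀ n : ℕ, N ≤ n → ∀ 𝓣 : Finset (Finset (Fin n)),
      (∀ S ∈ 𝓣, S.card = s) → ε * (n : ℝ) ^ s ≤ 𝓣.card →
      ∃ P : Fin s → Finset (Fin n), IsBox s 𝓣 P := by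
  induction s with
  | zero =>
    intro ε hε
    refine ⟨0, fun n _ 𝓣 hcard hbig => ?_⟩
    have hne : 𝓣.Nonempty := by
      rw [← card_pos]
      by_contra h
      push_neg at h
      interval_cases h' : 𝓣.card
      · simp [h'] at hbig; nlinarith
    obtain ⟨S, hS⟩ := hne
    have : S = ∅ := card_eq_zero.mp (hcard S hS)
    subst this
    refine ⟨Fin.elim0, fun i => i.elim0, fun i => i.elim0, fun S hsub _ => ?_⟩
    have : S = ∅ := by
      have : univ.biUnion (Fin.elim0 : Fin 0 → Finset (Fin n)) = ∅ := by
        ext z; simp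
      rw [this, subset_empty] at hsub
      exact hsub
    rwa [this]
  | succ s ih =>
    intro ε hε
    obtain ⟨N', hN'⟩ := ih (ε ^ 2 / 2) (by positivity)
    refine ⟨max (max N' (s + 1)) (⌈(2 : ℝ) / ε ^ 2⌉₊ + 1), fun n hn 𝓣 hcard hbig => ?_⟩
    classical
    have hnN' : N' ≤ n := le_trans (le_max_left _ _) (le_trans (le_max_left _ _) hn)
    have hns : s + 1 ≤ n := le_trans (le_max_right _ _) (le_trans (le_max_left _ _) hn)
    have hnc : (2 : ℝ) / ε ^ 2 < n := by
      have h1 : (⌈(2 : ℝ) / ε ^ 2⌉₊ + 1 : ℕ) ≤ n := le_trans (le_max_right _ _) hn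
      have h2 : ((2 : ℝ) / ε ^ 2) ≤ ⌈(2 : ℝ) / ε ^ 2⌉₊ := Nat.le_ceil _
      have h3 : ((⌈(2 : ℝ) / ε ^ 2⌉₊ : ℝ) + 1) ≤ n := by exact_mod_cast h1
      linarith
    have hn0 : 0 < n := lt_of_lt_of_le (Nat.succ_pos s) hns
    have hnR : (0 : ℝ) < n := by exact_mod_cast hn0
    set Ds := powersetCard s (univ : Finset (Fin n)) with hDs
    set d : Finset (Fin n) → ℕ :=
      fun D => (univ.filter (fun x => x ∉ D ∧ insert x D ∈ 𝓣)).card with hd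
    set L : Fin n → Fin n → Finset (Finset (Fin n)) := fun x y =>
      Ds.filter (fun D => x ∉ D ∧ y ∉ D ∧ insert x D ∈ 𝓣 ∧ insert y D ∈ 𝓣) with hL
    have hDmem : ∀ D : Finset (Fin n), D ∈ Ds ↔ D.card = s := by
      intro D
      rw [hDs, mem_powersetCard]
      exact ⟨fun h => h.2, fun h => ⟨subset_univ _, h⟩⟩
    -- Identity 1 : ∑ d = (s+1) * |𝓣|
    have id1 : ∑ D ∈ Ds, d D = (s + 1) * 𝓣.card := by
      have hA : ((Ds ×ˢ univ).filter (fun p => p.2 ∉ p.1 ∧ insert p.2 p.1 ∈ 𝓣)).card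
          = ∑ D ∈ Ds, d D := by
        rw [card_filter, Finset.sum_product]
        refine Finset.sum_congr rfl fun D _ => ?_
        rw [hd]
        simp only [card_filter]
      have hB : ((𝓣 ×ˢ univ).filter (fun q => q.2 ∈ q.1)).card = (s + 1) * 𝓣.card := by
        rw [card_filter, Finset.sum_product]
        have : ∀ S ∈ 𝓣, (∑ x : Fin n, if x ∈ S then 1 else 0) = (s + 1) := by
          intro S hS
          rw [← card_filter, filter_mem_eq_inter, univ_inter, hcard S hS]
        rw [Finset.sum_congr rfl this, Finset.sum_const, smul_eq_mul, mul_comm]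
      rw [← hA, ← hB]
      apply Finset.card_bij (fun p _ => (insert p.2 p.1, p.2))
      · rintro ⟨D, x⟩ hp
        rw [mem_filter] at hp
        obtain ⟨hmem, hx, hins⟩ := hp
        exact mem_filter.mpr ⟨mem_product.mpr ⟨hins, mem_univ x⟩, mem_insert_self x D⟩
      · rintro ⟨D1, x1⟩ h1 ⟨D2, x2⟩ h2 heq
        rw [mem_filter] at h1 h2
        simp only [Prod.mk.injEq] at heq
        obtain ⟨hins, hx⟩ := heq
        subst hx
        have hD : D1 = D2 := by
          have e1 : (insert x1 D1).erase x1 = D1 := Finset.erase_insert h1.2.1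
          have e2 : (insert x1 D2).erase x1 = D2 := Finset.erase_insert h2.2.1
          rw [← e1, ← e2, hins]
        simp [hD]
      · rintro ⟨S, x⟩ hq
        rw [mem_filter, mem_product] at hq
        obtain ⟨⟨hS, -⟩, hxS⟩ := hq
        refine ⟨(S.erase x, x),
          mem_filter.mpr ⟨mem_product.mpr ⟨?_, mem_univ _⟩, ?_, ?_⟩, ?_⟩
        · exact (hDmem _).mpr (by rw [card_erase_of_mem hxS, hcard S hS]; omega)
        · exact notMem_erase x S
        · rw [insert_erase hxS]; exact hS
        · simp [insert_erase hxS]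
    -- Identity 2 : ∑_{(x,y)} |L x y| = ∑ d * d
    have id2 : ∑ p ∈ (univ ×ˢ univ : Finset (Fin n × Fin n)), (L p.1 p.2).card
        = ∑ D ∈ Ds, d D * d D := by
      have hf : ∀ D : Finset (Fin n),
          (∑ x : Fin n, if x ∉ D ∧ insert x D ∈ 𝓣 then 1 else 0) = d D := by
        intro D
        rw [hd]
        simp only [card_filter]
      have h1 : ∀ x y : Fin n, (L x y).card =
          ∑ D ∈ Ds, (if x ∉ D ∧ insert x D ∈ 𝓣 then 1 else 0) *
            (if y ∉ D ∧ insert y D ∈ 𝓣 then 1 else 0) := by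
        intro x y
        rw [hL]
        simp only [card_filter]
        refine Finset.sum_congr rfl fun D _ => ?_
        by_cases hx : x ∉ D ∧ insert x D ∈ 𝓣 <;>
          by_cases hy : y ∉ D ∧ insert y D ∈ 𝓣 <;>
          simp [hx, hy] <;> tauto
      rw [Finset.sum_product]
      calc (∑ x : Fin n, ∑ y : Fin n, (L x y).card)
          = ∑ x : Fin n, ∑ D ∈ Ds,
              (if x ∉ D ∧ insert x D ∈ 𝓣 then 1 else 0) * d D := by
            refine Finset.sum_congr rfl fun x _ => ?_
            rw [Finset.sum_congr rfl fun y _ => h1 x y, Finset.sum_comm]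
            refine Finset.sum_congr rfl fun D _ => ?_
            rw [← Finset.mul_sum, hf D]
        _ = ∑ D ∈ Ds, d D * d D := by
            rw [Finset.sum_comm]
            refine Finset.sum_congr rfl fun D _ => ?_
            rw [← Finset.sum_mul, hf D]
    -- cast to ℝ and apply Cauchy–Schwarz
    have hM : (Ds.card : ℝ) ≤ (n : ℝ) ^ s := by
      rw [hDs, card_powersetCard, card_univ, Fintype.card_fin]
      exact_mod_cast Nat.choose_le_pow n s
    have hSdval : (∑ D ∈ Ds, (d D : ℝ)) = ((s : ℝ) + 1) * 𝓣.card := by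
      rw [← Nat.cast_sum, id1]
      push_cast
      ring
    have hSdlow : ε * (n : ℝ) ^ (s + 1) ≤ ∑ D ∈ Ds, (d D : ℝ) := by
      rw [hSdval]
      have h0 : (0 : ℝ) ≤ 𝓣.card := Nat.cast_nonneg _
      nlinarith
    have hCS : (∑ D ∈ Ds, (d D : ℝ)) ^ 2 ≤ (Ds.card : ℝ) * ∑ D ∈ Ds, (d D : ℝ) ^ 2 :=
      sq_sum_le_card_mul_sum_sq
    have key : ∃ x y : Fin n, x ≠ y ∧ ε ^ 2 / 2 * (n : ℝ) ^ s ≤ ((L x y).card : ℝ) := by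
      by_contra hcon
      push_neg at hcon
      have id2R : (∑ p ∈ (univ ×ˢ univ : Finset (Fin n × Fin n)), ((L p.1 p.2).card : ℝ))
          = ∑ D ∈ Ds, (d D : ℝ) ^ 2 := by
        have := congrArg (Nat.cast (R := ℝ)) id2
        push_cast at this
        simpa [sq] using this
      have hdiagcard : ((univ ×ˢ univ : Finset (Fin n × Fin n)).filter
          (fun p => p.1 = p.2)).card ≤ n := by
        have h1 : (((univ ×ˢ univ : Finset (Fin n × Fin n)).filter
            (fun p => p.1 = p.2))).card ≤ (univ : Finset (Fin n)).card := by
          apply Finset.card_le_card_of_injOn (fun p : Fin n × Fin n => p.1)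
            (fun p _ => mem_univ p.1)
          intro p hp q hq hpq
          have hp' := Finset.mem_filter.mp (Finset.mem_coe.mp hp)
          have hq' := Finset.mem_filter.mp (Finset.mem_coe.mp hq)
          exact Prod.ext hpq (by rw [← hp'.2, ← hq'.2]; exact hpq)
        rwa [card_univ, Fintype.card_fin] at h1
      have hdiag : ∑ p ∈ (univ ×ˢ univ : Finset (Fin n × Fin n)).filter (fun p => p.1 = p.2),
          ((L p.1 p.2).card : ℝ) ≤ (n : ℝ) * (n : ℝ) ^ s := by
        calc ∑ p ∈ (univ ×ˢ univ : Finset (Fin n × Fin n)).filter (fun p => p.1 = p.2),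
            ((L p.1 p.2).card : ℝ)
            ≤ ∑ _p ∈ (univ ×ˢ univ : Finset (Fin n × Fin n)).filter (fun p => p.1 = p.2),
              (n : ℝ) ^ s := by
              refine Finset.sum_le_sum fun p _ => le_trans ?_ hM
              have hle : (L p.1 p.2).card ≤ Ds.card := by
                rw [hL]; exact card_filter_le _ _
              exact_mod_cast hle
          _ ≤ (n : ℝ) * (n : ℝ) ^ s := by
              rw [Finset.sum_const, nsmul_eq_mul]
              have hpow : (0 : ℝ) ≤ (n : ℝ) ^ s := by positivity
              have : (((univ ×ˢ univ : Finset (Fin n × Fin n)).filter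
                  (fun p => p.1 = p.2)).card : ℝ) ≤ (n : ℝ) := by exact_mod_cast hdiagcard
              nlinarith
      have hoff : ∑ p ∈ (univ ×ˢ univ : Finset (Fin n × Fin n)).filter (fun p => ¬ p.1 = p.2),
          ((L p.1 p.2).card : ℝ) ≤ ((n : ℝ) * n) * (ε ^ 2 / 2 * (n : ℝ) ^ s) := by
        calc ∑ p ∈ (univ ×ˢ univ : Finset (Fin n × Fin n)).filter (fun p => ¬ p.1 = p.2),
            ((L p.1 p.2).card : ℝ)
            ≤ ∑ _p ∈ (univ ×ˢ univ : Finset (Fin n × Fin n)).filter (fun p => ¬ p.1 = p.2),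
              (ε ^ 2 / 2 * (n : ℝ) ^ s) := by
              refine Finset.sum_le_sum fun p hp => ?_
              rw [mem_filter] at hp
              exact le_of_lt (hcon p.1 p.2 hp.2)
          _ ≤ ((n : ℝ) * n) * (ε ^ 2 / 2 * (n : ℝ) ^ s) := by
              rw [Finset.sum_const, nsmul_eq_mul]
              have hb : (0 : ℝ) ≤ ε ^ 2 / 2 * (n : ℝ) ^ s := by positivity
              have hcle : (((univ ×ˢ univ : Finset (Fin n × Fin n)).filter
                  (fun p => ¬ p.1 = p.2)).card : ℝ) ≤ (n : ℝ) * n := by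
                have h1 : ((univ ×ˢ univ : Finset (Fin n × Fin n)).filter
                    (fun p => ¬ p.1 = p.2)).card ≤ n * n := by
                  refine le_trans (card_filter_le _ _) ?_
                  rw [card_product]
                  simp
                exact_mod_cast le_trans (Nat.cast_le.mpr h1) (by push_cast; exact le_refl _)
              nlinarith
      have hsplit := Finset.sum_filter_add_sum_filter_not
        (univ ×ˢ univ : Finset (Fin n × Fin n)) (fun p => p.1 = p.2)
        (fun p => ((L p.1 p.2).card : ℝ))
      -- put everything together
      have hApos : (0 : ℝ) < (n : ℝ) ^ s := by positivity
      have hsq : (∑ D ∈ Ds, (d D : ℝ) ^ 2) ≤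
          (n : ℝ) ^ s * n + (n : ℝ) * n * (ε ^ 2 / 2 * (n : ℝ) ^ s) := by
        rw [← id2R, ← hsplit]
        have := add_le_add hdiag hoff
        calc _ ≤ (n : ℝ) * (n : ℝ) ^ s + (n : ℝ) * n * (ε ^ 2 / 2 * (n : ℝ) ^ s) := this
          _ = (n : ℝ) ^ s * n + (n : ℝ) * n * (ε ^ 2 / 2 * (n : ℝ) ^ s) := by ring
      have hchain : (ε * ((n : ℝ) ^ s * n)) ^ 2 ≤
          (n : ℝ) ^ s * ((n : ℝ) ^ s * n + (n : ℝ) * n * (ε ^ 2 / 2 * (n : ℝ) ^ s)) := by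
        have h1 : ε * ((n : ℝ) ^ s * n) ≤ ∑ D ∈ Ds, (d D : ℝ) := by
          rw [← pow_succ]
          exact hSdlow
        have h2 : (ε * ((n : ℝ) ^ s * n)) ^ 2 ≤ (∑ D ∈ Ds, (d D : ℝ)) ^ 2 := by
          have hnn : (0 : ℝ) ≤ ε * ((n : ℝ) ^ s * n) := by positivity
          exact pow_le_pow_left₀ hnn h1 2
        have h3 : (Ds.card : ℝ) * (∑ D ∈ Ds, (d D : ℝ) ^ 2) ≤
            (n : ℝ) ^ s * (∑ D ∈ Ds, (d D : ℝ) ^ 2) := by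
          have : (0 : ℝ) ≤ ∑ D ∈ Ds, (d D : ℝ) ^ 2 :=
            Finset.sum_nonneg fun D _ => sq_nonneg _
          nlinarith
        have h4 : (n : ℝ) ^ s * (∑ D ∈ Ds, (d D : ℝ) ^ 2) ≤
            (n : ℝ) ^ s * ((n : ℝ) ^ s * n + (n : ℝ) * n * (ε ^ 2 / 2 * (n : ℝ) ^ s)) :=
          mul_le_mul_of_nonneg_left hsq (le_of_lt hApos)
        linarith [le_trans h2 (le_trans hCS h3)]
      have hnc2 : (2 : ℝ) < ε ^ 2 * n := by
        have hε2 : (0 : ℝ) < ε ^ 2 := by positivity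
        calc (2 : ℝ) = (2 / ε ^ 2) * ε ^ 2 := by field_simp
          _ < (n : ℝ) * ε ^ 2 := mul_lt_mul_of_pos_right hnc hε2
          _ = ε ^ 2 * n := by ring
      have hprod : (0 : ℝ) < ((n : ℝ) ^ s) ^ 2 * (n : ℝ) := by positivity
      have hhint := mul_lt_mul_of_pos_right hnc2 hprod
      have e1 : (n : ℝ) ^ s * ((n : ℝ) ^ s * (n : ℝ) + (n : ℝ) * (n : ℝ) * (ε ^ 2 / 2 * (n : ℝ) ^ s))
          = ((n : ℝ) ^ s) ^ 2 * (n : ℝ) + ε ^ 2 / 2 * ((((n : ℝ) ^ s) ^ 2 * (n : ℝ)) * (n : ℝ)) := by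
        ring
      have e2 : (ε * ((n : ℝ) ^ s * (n : ℝ))) ^ 2
          = (ε ^ 2 * (n : ℝ)) * (((n : ℝ) ^ s) ^ 2 * (n : ℝ)) := by ring
      rw [e1, e2] at hchain
      linarith only [hchain, hhint]
    obtain ⟨x, y, hxy, hLbig⟩ := key
    have hLcards : ∀ S ∈ L x y, S.card = s := by
      intro S hS
      rw [hL] at hS
      exact (hDmem S).mp (mem_filter.mp hS).1
    obtain ⟨Q, hQcard, hQdisj, hQtrans⟩ := hN' n hnN' (L x y) hLcards hLbig
    have hQne : ∀ i, (Q i).Nonempty := fun i => card_pos.mp (by rw [hQcard i]; omega)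
    have hxyQ : ∀ (i : Fin s) (a : Fin n), a ∈ Q i → a ≠ x ∧ a ≠ y := by
      intro i a ha
      obtain ⟨S, hSsub, hStr, haS⟩ := exists_transversal Q hQne hQdisj i a ha
      have hSL : S ∈ L x y := hQtrans S hSsub hStr
      rw [hL, mem_filter] at hSL
      obtain ⟨-, hxS, hyS, -, -⟩ := hSL
      exact ⟨fun h => hxS (h ▸ haS), fun h => hyS (h ▸ haS)⟩
    have hdisjxy : ∀ j : Fin s, Disjoint ({x, y} : Finset (Fin n)) (Q j) := by
      intro j
      rw [disjoint_left]
      intro a ha haQ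
      rcases mem_insert.mp ha with rfl | ha'
      · exact (hxyQ j _ haQ).1 rfl
      · exact (hxyQ j _ haQ).2 (mem_singleton.mp ha')
    clear hDmem id1 id2 hM hSdval hSdlow hCS hLcards hLbig hbig hcard hd
    clear_value Ds d L
    clear hDs
    refine ⟨Fin.cases ({x, y} : Finset (Fin n)) Q, ?_, ?_, ?_⟩
    · intro i
      rcases Fin.eq_zero_or_eq_succ i with rfl | ⟨i', rfl⟩
      · exact card_pair hxy
      · exact hQcard i'
    · intro i j hij
      rcases Fin.eq_zero_or_eq_succ i with rfl | ⟨i', rfl⟩ <;>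
        rcases Fin.eq_zero_or_eq_succ j with rfl | ⟨j', rfl⟩
      · exact absurd rfl hij
      · exact hdisjxy j'
      · exact (hdisjxy i').symm
      · exact hQdisj i' j' (fun h => hij (by rw [h]))
    · intro S hsub htr
      have hz1 : (S ∩ ({x, y} : Finset (Fin n))).card = 1 := htr 0
      obtain ⟨z, hz⟩ := card_eq_one.mp hz1
      have hzS : z ∈ S ∧ z ∈ ({x, y} : Finset (Fin n)) := by
        have hmem : z ∈ S ∩ {x, y} := by rw [hz]; exact mem_singleton_self z
        exact ⟨(mem_inter.mp hmem).1, (mem_inter.mp hmem).2⟩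
      set D := S \ {x, y} with hDdef
      have hDQ : ∀ i, (D ∩ Q i).card = 1 := by
        intro i
        have heq : D ∩ Q i = S ∩ Q i := by
          ext w
          simp only [hDdef, mem_inter, mem_sdiff]
          constructor
          · rintro ⟨⟨hw, -⟩, hwq⟩; exact ⟨hw, hwq⟩
          · rintro ⟨hw, hwq⟩
            refine ⟨⟨hw, ?_⟩, hwq⟩
            intro hwxy
            rcases mem_insert.mp hwxy with rfl | h
            · exact (hxyQ i _ hwq).1 rfl
            · exact (hxyQ i _ hwq).2 (mem_singleton.mp h)
        rw [heq]
        exact htr i.succ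
      have hDsub : D ⊆ univ.biUnion Q := by
        intro w hw
        have hwS : w ∈ S := (mem_sdiff.mp hw).1
        have hwB := hsub hwS
        rw [mem_biUnion] at hwB
        obtain ⟨i, -, hwi⟩ := hwB
        rcases Fin.eq_zero_or_eq_succ i with rfl | ⟨i', rfl⟩
        · exact absurd hwi (mem_sdiff.mp hw).2
        · exact mem_biUnion.mpr ⟨i', mem_univ i', hwi⟩
      have hDL := hQtrans D hDsub hDQ
      rw [hL, mem_filter] at hDL
      obtain ⟨-, hxD, hyD, hxT, hyT⟩ := hDL
      have hSz : S = insert z D := by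
        ext w
        simp only [mem_insert, hDdef, mem_sdiff]
        constructor
        · intro hw
          by_cases hwxy : w ∈ ({x, y} : Finset (Fin n))
          · left
            have hmem : w ∈ S ∩ {x, y} := mem_inter.mpr ⟨hw, hwxy⟩
            rw [hz] at hmem
            exact mem_singleton.mp hmem
          · right; exact ⟨hw, fun h => hwxy (mem_insert.mpr h)⟩
        · rintro (rfl | ⟨hw, -⟩)
          · exact hzS.1
          · exact hw
      rcases mem_insert.mp hzS.2 with rfl | hzy
      · rw [hSz]; exact hxT
      · rw [hSz, mem_singleton.mp hzy]; exact hyT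

lemma finpartition_of_box {n s : ℕ} (hn : 2 * s ≤ n) (P : Fin s → Finset (Fin n))
    (hc : ∀ i, (P i).card = 2) (hd : ∀ i j, i ≠ j → Disjoint (P i) (P j)) :
    ∃ Pt : Finpartition (univ : Finset (Fin n)),
      Pt.parts = (univ.image P) ∪ ((univ \ univ.biUnion P).image fun z => ({z} : Finset (Fin n)))
        ∧ Pt.parts.card = n - s := by
  classical
  set parts := (univ.image P) ∪
    ((univ \ univ.biUnion P).image fun z => ({z} : Finset (Fin n))) with hparts
  have hmem : ∀ c, c ∈ parts ↔ ((∃ i, c = P i) ∨ ∃ z, z ∉ univ.biUnion P ∧ c = {z}) := by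
    intro c
    rw [hparts, mem_union, mem_image, mem_image]
    constructor
    · rintro (⟨i, -, rfl⟩ | ⟨z, hz, rfl⟩)
      · exact Or.inl ⟨i, rfl⟩
      · exact Or.inr ⟨z, (mem_sdiff.mp hz).2, rfl⟩
    · rintro (⟨i, rfl⟩ | ⟨z, hz, rfl⟩)
      · exact Or.inl ⟨i, mem_univ i, rfl⟩
      · exact Or.inr ⟨z, mem_sdiff.mpr ⟨mem_univ z, hz⟩, rfl⟩
  have hPinj : ∀ i j : Fin s, P i = P j → i = j := by
    intro i j hij
    by_contra hne
    have h1 := hd i j hne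
    rw [hij, disjoint_self] at h1
    have := hc j
    rw [h1] at this
    simp at this
  refine ⟨⟨parts, ?_, ?_, ?_⟩, rfl, ?_⟩
  · -- supIndep
    rw [Finset.supIndep_iff_pairwiseDisjoint]
    intro a ha b hb hab
    have ha' := (hmem a).mp (Finset.mem_coe.mp ha)
    have hb' := (hmem b).mp (Finset.mem_coe.mp hb)
    rcases ha' with ⟨i, rfl⟩ | ⟨z, hz, rfl⟩ <;> rcases hb' with ⟨j, rfl⟩ | ⟨w, hw, rfl⟩
    · exact hd i j (fun h => hab (by rw [h]))
    · exact Finset.disjoint_singleton_right.mpr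
        (fun h => hw (mem_biUnion.mpr ⟨i, mem_univ i, h⟩))
    · exact Finset.disjoint_singleton_left.mpr
        (fun h => hz (mem_biUnion.mpr ⟨j, mem_univ j, h⟩))
    · exact Finset.disjoint_singleton_left.mpr
        (fun h => hab (by rw [mem_singleton.mp h]))
  · -- sup = univ
    apply Finset.Subset.antisymm
    · intro a ha
      exact mem_univ a
    · intro a _
      rw [Finset.mem_sup]
      by_cases hb : a ∈ univ.biUnion P
      · obtain ⟨i, -, hi⟩ := mem_biUnion.mp hb
        exact ⟨P i, (hmem _).mpr (Or.inl ⟨i, rfl⟩), hi⟩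
      · exact ⟨{a}, (hmem _).mpr (Or.inr ⟨a, hb, rfl⟩), mem_singleton_self a⟩
  · -- ⊥ ∉ parts
    intro hbot
    rcases (hmem ⊥).mp hbot with ⟨i, hi⟩ | ⟨z, -, hz⟩
    · have := hc i
      rw [← hi] at this
      simp at this
    · exact (singleton_ne_empty z) hz.symm
  · -- card
    have hdisj2 : Disjoint (univ.image P)
        ((univ \ univ.biUnion P).image fun z => ({z} : Finset (Fin n))) := by
      rw [disjoint_left]
      intro c hcP hcS
      obtain ⟨i, -, rfl⟩ := mem_image.mp hcP
      obtain ⟨z, -, hz⟩ := mem_image.mp hcS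
      have h2 := hc i
      rw [← hz] at h2
      simp at h2
    have hcard1 : (univ.image P).card = s := by
      rw [Finset.card_image_of_injOn (fun i _ j _ h => hPinj i j h), card_univ,
        Fintype.card_fin]
    have hbcard : (univ.biUnion P).card = 2 * s := by
      rw [Finset.card_biUnion (fun i _ j _ hij => hd i j hij)]
      rw [Finset.sum_congr rfl (fun i _ => hc i), Finset.sum_const, card_univ,
        Fintype.card_fin, smul_eq_mul]
      ring
    have hcard2 : ((univ \ univ.biUnion P).image fun z => ({z} : Finset (Fin n))).card
        = n - 2 * s := by
      rw [Finset.card_image_of_injOn (fun z _ w _ h => singleton_injective h),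
        card_sdiff_of_subset (subset_univ _), card_univ, Fintype.card_fin, hbcard]
    show parts.card = n - s
    rw [hparts, card_union_of_disjoint hdisj2, hcard1, hcard2]
    omega

lemma crosses_all_full (n k : ℕ) :
    CrossesAllPartitions (powersetCard k (univ : Finset (Fin n))) k := by
  classical
  intro Pt hPt
  have hpd := Finset.supIndep_iff_pairwiseDisjoint.mp Pt.supIndep
  set H := Pt.parts.attach.image
    (fun c => c.1.min' (Pt.nonempty_of_mem_parts c.2)) with hH
  have hinj : ∀ c ∈ Pt.parts.attach, ∀ c' ∈ Pt.parts.attach,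
      c.1.min' (Pt.nonempty_of_mem_parts c.2) = c'.1.min' (Pt.nonempty_of_mem_parts c'.2)
      → c = c' := by
    intro c _ c' _ h
    by_contra hne
    have hcc' : c.1 ≠ c'.1 := fun hval => hne (Subtype.ext hval)
    have hdj := hpd (Finset.mem_coe.mpr c.2) (Finset.mem_coe.mpr c'.2) hcc'
    have h1 := c.1.min'_mem (Pt.nonempty_of_mem_parts c.2)
    have h2 := c'.1.min'_mem (Pt.nonempty_of_mem_parts c'.2)
    rw [h] at h1
    exact Finset.disjoint_left.mp hdj h1 h2
  have hHcard : H.card = k := by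
    rw [hH, Finset.card_image_of_injOn hinj, card_attach, hPt]
  have hmemH : ∀ c (hc : c ∈ Pt.parts), c.min' (Pt.nonempty_of_mem_parts hc) ∈ H := by
    intro c hc
    rw [hH]
    exact mem_image.mpr ⟨⟨c, hc⟩, mem_attach _ _, rfl⟩
  refine ⟨H, mem_powersetCard.mpr ⟨subset_univ _, hHcard⟩, ?_⟩
  unfold Crosses
  rw [hHcard, hPt, min_self]
  rw [Finset.filter_true_of_mem, hPt]
  intro c hc
  exact ⟨c.min' (Pt.nonempty_of_mem_parts hc),
    mem_inter.mpr ⟨c.min'_mem _, hmemH c hc⟩⟩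

lemma choose_mem_fset (n s : ℕ) (hsn : s ≤ n) :
    n.choose s ∈ { m | ∃ 𝓗 : Finset (Finset (Fin n)),
      (∀ H ∈ 𝓗, H.card = n - s) ∧ CrossesAllPartitions 𝓗 (n - s) ∧ 𝓗.card = m } := by
  refine ⟨powersetCard (n - s) univ, fun H hH => (mem_powersetCard.mp hH).2,
    crosses_all_full n (n - s), ?_⟩
  rw [card_powersetCard, card_univ, Fintype.card_fin, Nat.choose_symm hsn]

lemma lower_bound {n s : ℕ} (hn : 2 * s ≤ n) (𝓗 : Finset (Finset (Fin n)))
    (hunif : ∀ H ∈ 𝓗, H.card = n - s) (hcross : CrossesAllPartitions 𝓗 (n - s))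
    (P : Fin s → Finset (Fin n)) (hc : ∀ i, (P i).card = 2)
    (hd : ∀ i j, i ≠ j → Disjoint (P i) (P j)) :
    ∃ S : Finset (Fin n), S ⊆ univ.biUnion P ∧ (∀ i, (S ∩ P i).card = 1) ∧
      (univ \ S) ∈ 𝓗 := by
  classical
  obtain ⟨Pt, hPtparts, hPtcard⟩ := finpartition_of_box hn P hc hd
  obtain ⟨H, hH𝓗, hHcr⟩ := hcross Pt hPtcard
  have hHcard : H.card = n - s := hunif H hH𝓗
  have hfilter : Pt.parts.filter (fun c => (c ∩ H).Nonempty) = Pt.parts := by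
    apply Finset.eq_of_subset_of_card_le (filter_subset _ _)
    unfold Crosses at hHcr
    rw [hHcr, hHcard, hPtcard, min_self]
  have hall : ∀ c ∈ Pt.parts, (c ∩ H).Nonempty := by
    intro c hcp
    rw [← hfilter] at hcp
    exact (mem_filter.mp hcp).2
  have hpartsP : ∀ i, P i ∈ Pt.parts := by
    intro i
    rw [hPtparts]
    exact mem_union_left _ (mem_image.mpr ⟨i, mem_univ i, rfl⟩)
  have hsing : ∀ z, z ∉ univ.biUnion P → ({z} : Finset (Fin n)) ∈ Pt.parts := by
    intro z hz
    rw [hPtparts]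
    exact mem_union_right _ (mem_image.mpr ⟨z, mem_sdiff.mpr ⟨mem_univ z, hz⟩, rfl⟩)
  set S := univ \ H with hS
  have hSsub : S ⊆ univ.biUnion P := by
    intro z hz
    by_contra hzB
    obtain ⟨w, hw⟩ := hall {z} (hsing z hzB)
    rw [mem_inter, mem_singleton] at hw
    obtain ⟨rfl, hwH⟩ := hw
    exact (mem_sdiff.mp hz).2 hwH
  have hScard : S.card = s := by
    rw [hS, card_sdiff_of_subset (subset_univ _), card_univ, Fintype.card_fin, hHcard]
    omega
  have hSle : ∀ i, (S ∩ P i).card ≤ 1 := by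
    intro i
    obtain ⟨w, hw⟩ := hall (P i) (hpartsP i)
    rw [mem_inter] at hw
    have hsub : S ∩ P i ⊆ (P i).erase w := by
      intro u hu
      rw [mem_inter] at hu
      refine mem_erase.mpr ⟨?_, hu.2⟩
      intro huw
      exact (mem_sdiff.mp hu.1).2 (huw ▸ hw.2)
    calc (S ∩ P i).card ≤ ((P i).erase w).card := card_le_card hsub
      _ = 1 := by rw [card_erase_of_mem hw.1, hc i]
  have hSsum : ∑ i : Fin s, (S ∩ P i).card = s := by
    have hSeq : S = univ.biUnion (fun i => S ∩ P i) := by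
      ext u
      rw [mem_biUnion]
      constructor
      · intro hu
        obtain ⟨i, -, hi⟩ := mem_biUnion.mp (hSsub hu)
        exact ⟨i, mem_univ i, mem_inter.mpr ⟨hu, hi⟩⟩
      · rintro ⟨i, -, hi⟩
        exact (mem_inter.mp hi).1
    have hdisj : ∀ i ∈ (univ : Finset (Fin s)), ∀ j ∈ univ, i ≠ j →
        Disjoint (S ∩ P i) (S ∩ P j) := by
      intro i _ j _ hij
      exact (hd i j hij).mono inter_subset_right inter_subset_right
    rw [← Finset.card_biUnion hdisj, ← hSeq, hScard]
  have hStr : ∀ i, (S ∩ P i).card = 1 := by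
    intro i
    by_contra hne
    have hzero : (S ∩ P i).card = 0 := by
      have := hSle i
      omega
    have hsplit : (∑ j ∈ univ.erase i, (S ∩ P j).card) + (S ∩ P i).card
        = ∑ j : Fin s, (S ∩ P j).card :=
      Finset.sum_erase_add univ (fun j => (S ∩ P j).card) (mem_univ i)
    have hrest : ∑ j ∈ univ.erase i, (S ∩ P j).card ≤ (univ.erase i).card := by
      calc ∑ j ∈ univ.erase i, (S ∩ P j).card ≤ ∑ j ∈ univ.erase i, 1 :=
        Finset.sum_le_sum (fun j _ => hSle j)
        _ = (univ.erase i).card := by rw [Finset.sum_const, smul_eq_mul, mul_one]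
    have hec : (univ.erase i).card = s - 1 := by
      rw [card_erase_of_mem (mem_univ i), card_univ, Fintype.card_fin]
    have hspos : 0 < s := Fin.pos i
    rw [hSsum] at hsplit
    omega
  refine ⟨S, hSsub, hStr, ?_⟩
  have : univ \ S = H := by
    rw [hS, sdiff_sdiff_self_left, univ_inter]
  rwa [this]

theorem stmt14 (s : ℕ) (hs : 2 ≤ s) :
    Filter.Tendsto (fun n : ℕ =>
        ((f n (n - s) (n - s) : ℝ) - (n.choose s : ℝ)) / (n : ℝ) ^ s)
      Filter.atTop (nhds 0) := by
  rw [NormedAddCommGroup.tendsto_nhds_zero]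
  intro ε hε
  obtain ⟨N, hN⟩ := box_theorem s (ε / 2) (half_pos hε)
  rw [Filter.eventually_atTop]
  refine ⟨max N (2 * s + 1), fun n hn => ?_⟩
  classical
  have hnN : N ≤ n := le_trans (le_max_left _ _) hn
  have hn2s : 2 * s ≤ n := by
    have := le_trans (le_max_right _ _) hn
    omega
  have hsn : s ≤ n := by omega
  have hn0 : 0 < n := by omega
  have hnpow : (0 : ℝ) < (n : ℝ) ^ s := by positivity
  have hKne : { m | ∃ 𝓗 : Finset (Finset (Fin n)),
      (∀ H ∈ 𝓗, H.card = n - s) ∧ CrossesAllPartitions 𝓗 (n - s) ∧ 𝓗.card = m }.Nonempty :=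
    ⟨n.choose s, choose_mem_fset n s hsn⟩
  have hupper : f n (n - s) (n - s) ≤ n.choose s :=
    Nat.sInf_le (choose_mem_fset n s hsn)
  obtain ⟨𝓗, hunif, hcross, hcard⟩ := Nat.sInf_mem hKne
  set 𝓢 := 𝓗.image (fun H => univ \ H) with h𝓢
  have h𝓢card : 𝓢.card = 𝓗.card := by
    rw [h𝓢]
    apply Finset.card_image_of_injOn
    intro A hA B hB h
    have h' : univ \ A = univ \ B := h
    have h1 : univ \ (univ \ A) = univ \ (univ \ B) := by rw [h']
    rwa [sdiff_sdiff_self_left, sdiff_sdiff_self_left, univ_inter, univ_inter] at h1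
  have h𝓢sub : 𝓢 ⊆ powersetCard s univ := by
    intro S hS
    rw [h𝓢] at hS
    obtain ⟨H, hH, rfl⟩ := mem_image.mp hS
    refine mem_powersetCard.mpr ⟨subset_univ _, ?_⟩
    rw [card_sdiff_of_subset (subset_univ _), card_univ, Fintype.card_fin, hunif H hH]
    omega
  set 𝓣 := powersetCard s (univ : Finset (Fin n)) \ 𝓢 with h𝓣
  have h𝓣card : 𝓣.card = n.choose s - 𝓢.card := by
    rw [h𝓣, card_sdiff_of_subset h𝓢sub, card_powersetCard, card_univ, Fintype.card_fin]
  have h𝓢le : 𝓢.card ≤ n.choose s := by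
    have h2 := Finset.card_le_card h𝓢sub
    rwa [card_powersetCard, card_univ, Fintype.card_fin] at h2
  have hsmall : ((𝓣.card : ℝ)) < ε / 2 * (n : ℝ) ^ s := by
    by_contra hbig
    push_neg at hbig
    obtain ⟨P, hc, hd, htr⟩ := hN n hnN 𝓣
      (fun S hS => (mem_powersetCard.mp (mem_sdiff.mp hS).1).2) hbig
    obtain ⟨S, hSsub, hStr, hScomp⟩ := lower_bound hn2s 𝓗 hunif hcross P hc hd
    have hS𝓣 : S ∈ 𝓣 := htr S hSsub hStr
    have hS𝓢 : S ∈ 𝓢 := by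
      rw [h𝓢]
      refine mem_image.mpr ⟨univ \ S, hScomp, ?_⟩
      rw [sdiff_sdiff_self_left, univ_inter]
    exact (mem_sdiff.mp hS𝓣).2 hS𝓢
  have hm : 𝓗.card = f n (n - s) (n - s) := hcard
  have hCsplit : (n.choose s : ℝ) - (f n (n - s) (n - s) : ℝ) = (𝓣.card : ℝ) := by
    have hC : n.choose s = f n (n - s) (n - s) + 𝓣.card := by
      rw [h𝓣card, ← hm, h𝓢card]
      omega
    rw [hC]
    push_cast
    ring
  rw [Real.norm_eq_abs, abs_div, abs_of_pos hnpow]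
  have hnum : |(f n (n - s) (n - s) : ℝ) - (n.choose s : ℝ)| = (𝓣.card : ℝ) := by
    rw [abs_sub_comm]
    rw [abs_of_nonneg (by
      have hle : (f n (n - s) (n - s) : ℝ) ≤ (n.choose s : ℝ) := by exact_mod_cast hupper
      linarith)]
    exact hCsplit
  rw [hnum, div_lt_iff₀ hnpow]
  calc (𝓣.card : ℝ) < ε / 2 * (n : ℝ) ^ s := hsmall
    _ ≤ ε * (n : ℝ) ^ s := by nlinarith
end

section
/- For all integers n and k with n > k ≥ 1, f(n, k, n−1) = k. -/
open Finset

lemma crosses_compl_singleton_iff {n k : ℕ} (hk : 1 ≤ k) (hkn : k < n)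
    (P : Finpartition (univ : Finset (Fin n))) (hP : P.parts.card = k) (x : Fin n) :
    Crosses ({x}ᶜ : Finset (Fin n)) P ↔ {x} ∉ P.parts := by
  have hcard : ({x}ᶜ : Finset (Fin n)).card = n - 1 := by
    simp [Finset.card_compl]
  have hmin : min ({x}ᶜ : Finset (Fin n)).card P.parts.card = k := by
    rw [hcard, hP]; exact min_eq_right (Nat.le_sub_one_of_lt hkn)
  have hfilter : P.parts.filter (fun c => (c ∩ ({x}ᶜ : Finset (Fin n))).Nonempty)
      = P.parts.erase {x} := by
    ext c
    simp only [mem_filter, mem_erase]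
    constructor
    · rintro ⟨hc, hne⟩
      refine ⟨?_, hc⟩
      rintro rfl
      simp at hne
    · rintro ⟨hne, hc⟩
      refine ⟨hc, ?_⟩
      have hid : c ∩ ({x}ᶜ : Finset (Fin n)) = c \ {x} := by
        ext y; simp [Finset.mem_sdiff, and_comm]
      rw [hid, sdiff_nonempty]
      intro hsub
      rcases Finset.subset_singleton_iff.mp hsub with h | h
      · exact (P.nonempty_of_mem_parts hc).ne_empty h
      · exact hne h
  unfold Crosses
  rw [hmin, hfilter]
  constructor
  · intro h hx
    rw [card_erase_of_mem hx, hP] at h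
    omega
  · intro hx
    rw [erase_eq_of_notMem hx, hP]

lemma mk_partition {n : ℕ} (V : Finset (Fin n)) (hV : V.card < n) :
    ∃ P : Finpartition (univ : Finset (Fin n)),
      P.parts = insert Vᶜ (V.image fun x => ({x} : Finset (Fin n))) := by
  have hcompl : (Vᶜ : Finset (Fin n)).Nonempty := by
    rw [← card_pos, card_compl]
    simpa using Nat.sub_pos_of_lt (by simpa using hV)
  refine ⟨⟨insert Vᶜ (V.image fun x => {x}), ?_, ?_, ?_⟩, rfl⟩
  · rw [supIndep_iff_pairwiseDisjoint]
    intro a ha b hb hab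
    simp only [coe_insert, Set.mem_insert_iff, mem_coe, mem_image] at ha hb
    have key : ∀ u v : Finset (Fin n),
        (u = Vᶜ ∨ ∃ x ∈ V, {x} = u) → (v = Vᶜ ∨ ∃ x ∈ V, {x} = v) → u ≠ v →
        Disjoint (id u) (id v) := by
      intro u v hu hv huv
      simp only [id]
      rcases hu with rfl | ⟨x, hx, rfl⟩
      · rcases hv with rfl | ⟨y, hy, rfl⟩
        · exact absurd rfl huv
        · rw [disjoint_comm]
          simp only [Finset.disjoint_left]
          intro a ha hay
          rw [Finset.mem_singleton] at ha
          subst ha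
          exact (Finset.mem_compl.mp hay) hy
      · rcases hv with rfl | ⟨y, hy, rfl⟩
        · simp only [Finset.disjoint_left]
          intro a ha hay
          rw [Finset.mem_singleton] at ha
          subst ha
          exact (Finset.mem_compl.mp hay) hx
        · simp only [Finset.disjoint_singleton]
          intro h; exact huv (by rw [h])
    exact key a b ha hb hab
  · apply le_antisymm (le_top)
    intro x _
    rw [mem_sup]
    by_cases hx : x ∈ V
    · exact ⟨{x}, mem_insert_of_mem (mem_image_of_mem _ hx), mem_singleton_self x⟩
    · exact ⟨Vᶜ, mem_insert_self _ _, by simpa using hx⟩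
  · simp only [bot_eq_empty, mem_insert, mem_image, not_or]
    constructor
    · intro h
      exact hcompl.ne_empty h.symm
    · rintro ⟨x, _, hx⟩
      exact (singleton_nonempty x).ne_empty hx

theorem stmt16 (n k : ℕ) (hk : 1 ≤ k) (hkn : k < n) :
    f n k (n - 1) = k := by
  -- membership of k in the defining set (upper bound witness)
  obtain ⟨S, -, hScard⟩ := Finset.exists_subset_card_eq
    (show k ≤ (univ : Finset (Fin n)).card by simpa using hkn.le)
  have hcomplinj : Function.Injective (fun x : Fin n => ({x}ᶜ : Finset (Fin n))) := by
    intro a b hab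
    have := compl_injective hab
    simpa using this
  have hmem : k ∈ { m | ∃ 𝓗 : Finset (Finset (Fin n)),
      (∀ H ∈ 𝓗, H.card = n - 1) ∧ CrossesAllPartitions 𝓗 k ∧ 𝓗.card = m } := by
    refine ⟨S.image (fun x => ({x}ᶜ : Finset (Fin n))), ?_, ?_, ?_⟩
    · intro H hH
      rw [mem_image] at hH
      obtain ⟨x, -, rfl⟩ := hH
      simp [card_compl]
    · intro P hP
      by_contra hno
      have hall : ∀ x ∈ S, {x} ∈ P.parts := by
        intro x hx
        by_contra hnx
        exact hno ⟨{x}ᶜ, mem_image_of_mem _ hx,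
          (crosses_compl_singleton_iff hk hkn P hP x).mpr hnx⟩
      have hsub : S.image (fun x => ({x} : Finset (Fin n))) ⊆ P.parts := by
        intro c hc
        rw [mem_image] at hc
        obtain ⟨x, hx, rfl⟩ := hc
        exact hall x hx
      have hcardim : (S.image (fun x => ({x} : Finset (Fin n)))).card = k := by
        rw [Finset.card_image_of_injective _ (fun a b h => by simpa using h), hScard]
      have heq : S.image (fun x => ({x} : Finset (Fin n))) = P.parts :=
        Finset.eq_of_subset_of_card_le hsub (by rw [hP, hcardim])
      have hsup : P.parts.sup id = S := by
        rw [← heq, Finset.sup_image]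
        ext y; simp
      have : (univ : Finset (Fin n)) = S := by rw [← P.sup_parts, hsup]
      have : n = k := by rw [← Fintype.card_fin n, ← Finset.card_univ, this, hScard]
      omega
    · rw [Finset.card_image_of_injective _ hcomplinj, hScard]
  -- lower bound
  have hlow : ∀ m ∈ { m | ∃ 𝓗 : Finset (Finset (Fin n)),
      (∀ H ∈ 𝓗, H.card = n - 1) ∧ CrossesAllPartitions 𝓗 k ∧ 𝓗.card = m }, k ≤ m := by
    rintro m ⟨𝓗, huni, hcross, rfl⟩
    by_contra hlt
    push_neg at hlt
    -- the set of excluded vertices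
    set S := (univ : Finset (Fin n)).filter (fun x => ({x}ᶜ : Finset (Fin n)) ∈ 𝓗) with hS
    have hform : ∀ H ∈ 𝓗, ∃ x ∈ S, H = {x}ᶜ := by
      intro H hH
      have hc : (Hᶜ : Finset (Fin n)).card = 1 := by
        rw [card_compl, huni H hH, Fintype.card_fin]
        omega
      obtain ⟨x, hx⟩ := Finset.card_eq_one.mp hc
      have hHx : H = {x}ᶜ := by rw [← hx, compl_compl]
      refine ⟨x, ?_, hHx⟩
      rw [hS, mem_filter]
      exact ⟨mem_univ x, hHx ▸ hH⟩
    have hScard : S.card ≤ 𝓗.card := by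
      have : S.image (fun x => ({x}ᶜ : Finset (Fin n))) ⊆ 𝓗 := by
        intro H hH
        rw [mem_image] at hH
        obtain ⟨x, hx, rfl⟩ := hH
        rw [hS, mem_filter] at hx
        exact hx.2
      calc S.card = (S.image (fun x => ({x}ᶜ : Finset (Fin n)))).card :=
            (Finset.card_image_of_injective _ hcomplinj).symm
        _ ≤ 𝓗.card := Finset.card_le_card this
    obtain ⟨V, hSV, hVcard⟩ := Finset.exists_superset_card_eq
      (show S.card ≤ k - 1 by omega)
      (show k - 1 ≤ (univ : Finset (Fin n)).card by simp; omega)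
    obtain ⟨P, hPparts⟩ := mk_partition V (by omega)
    have hnotmem : Vᶜ ∉ V.image (fun x => ({x} : Finset (Fin n))) := by
      rw [mem_image]
      rintro ⟨x, hx, hxc⟩
      have : x ∈ Vᶜ := by rw [← hxc]; exact mem_singleton_self x
      exact (Finset.mem_compl.mp this) hx
    have hPk : P.parts.card = k := by
      rw [hPparts, card_insert_of_notMem hnotmem,
        Finset.card_image_of_injective _ (fun a b h => by simpa using h), hVcard]
      omega
    obtain ⟨H, hH, hcr⟩ := hcross P hPk
    obtain ⟨x, hxS, rfl⟩ := hform H hH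
    have hxV : {x} ∈ P.parts := by
      rw [hPparts]
      exact mem_insert_of_mem (mem_image_of_mem _ (hSV hxS))
    exact (crosses_compl_singleton_iff hk hkn P hPk x).mp hcr hxV
  have hne : { m | ∃ 𝓗 : Finset (Finset (Fin n)),
      (∀ H ∈ 𝓗, H.card = n - 1) ∧ CrossesAllPartitions 𝓗 k ∧ 𝓗.card = m }.Nonempty := ⟨k, hmem⟩
  exact le_antisymm (Nat.sInf_le hmem) (hlow _ (Nat.sInf_mem hne))
end

section
/- Let s and t be fixed integers with s > t ≥ 2. Then there exists a constant c = c(s,t) > 0 such that for all sufficiently large n, f(n, n−s, n−t) ≤ (1 − c) · C(n,t), where C(n,t) denotes the binomial coefficient. -/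
open Finset

lemma key (s t n : ℕ) (ht : 2 ≤ t) (hst : t < s) (hn : 2*t + s + 1 ≤ n) :
    ∃ 𝓗 : Finset (Finset (Fin n)), (∀ H ∈ 𝓗, H.card = n - t) ∧
      CrossesAllPartitions 𝓗 (n - s) ∧
      ((𝓗.card : ℝ) ≤ (1 - 1/(2*t:ℝ)^t) * (n.choose t : ℝ)) := by
  have ht0 : 0 < t := by omega
  have hn0 : 0 < n := by omega
  classical
  set res : Fin n → ℕ := fun x => x.1 % t with hres
  set rainbow : Finset (Fin n) → Prop :=
    fun T => ∀ x ∈ T, ∀ y ∈ T, res x = res y → x = y with hrb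
  set 𝓣 : Finset (Finset (Fin n)) :=
    ((univ : Finset (Fin n)).powersetCard t).filter (fun T => ¬ rainbow T) with hT
  refine ⟨𝓣.image (fun T => Tᶜ), ?_, ?_, ?_⟩
  · intro H hH
    obtain ⟨T, hTmem, rfl⟩ := mem_image.1 hH
    have : T.card = t := (mem_powersetCard.1 (mem_filter.1 hTmem).1).2
    rw [card_compl, this, Fintype.card_fin]
  · -- crosses all (n-s)-partitions
    intro P hP
    have hne : ∀ c ∈ P.parts, c.Nonempty := fun c hc => P.nonempty_of_mem_parts hc
    set R : Finset (Fin n) := P.parts.attach.image (fun c => (hne c.1 c.2).choose) with hR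
    have hRcard : R.card = n - s := by
      rw [hR, card_image_of_injOn, card_attach, hP]
      intro c hc d hd hcd
      dsimp only at hcd
      have h2 := (hne d.1 d.2).choose_spec
      rw [← hcd] at h2
      exact Subtype.ext (P.eq_of_mem_parts c.2 d.2 (hne c.1 c.2).choose_spec h2)
    set S : Finset (Fin n) := Rᶜ with hS
    have hScard : S.card = s := by
      rw [hS, card_compl, hRcard, Fintype.card_fin]; omega
    have hmap : ∀ x ∈ S, res x ∈ Finset.range t := by
      intro x _; exact mem_range.2 (Nat.mod_lt _ ht0)
    have hcard : (Finset.range t).card < S.card := by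
      rw [card_range, hScard]; omega
    obtain ⟨a, ha, b, hb, hab, heq⟩ :=
      Finset.exists_ne_map_eq_of_card_lt_of_maps_to hcard hmap
    have hpair : ({a, b} : Finset (Fin n)) ⊆ S := by
      intro x hx; rcases mem_insert.1 hx with rfl | hx
      · exact ha
      · exact (mem_singleton.1 hx) ▸ hb
    have hpaircard : ({a, b} : Finset (Fin n)).card = 2 := card_pair hab
    obtain ⟨T, hTsub, hTS, hTcard⟩ :=
      Finset.exists_subsuperset_card_eq (n := t) hpair (by rw [hpaircard]; omega)
        (by rw [hScard]; omega)
    have hT𝓣 : T ∈ 𝓣 := by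
      rw [hT, mem_filter, mem_powersetCard]
      refine ⟨⟨subset_univ _, hTcard⟩, ?_⟩
      intro h
      exact hab (h a (hTsub (mem_insert_self _ _)) b
        (hTsub (mem_insert_of_mem (mem_singleton_self _))) heq)
    refine ⟨Tᶜ, mem_image_of_mem _ hT𝓣, ?_⟩
    have hRsub : R ⊆ Tᶜ := by
      intro x hx
      rw [mem_compl]
      intro hxT
      have : x ∈ S := hTS hxT
      rw [hS, mem_compl] at this
      exact this hx
    have hall : ∀ c ∈ P.parts, (c ∩ Tᶜ).Nonempty := by
      intro c hc
      refine ⟨(hne c hc).choose, mem_inter.2 ⟨(hne c hc).choose_spec, hRsub ?_⟩⟩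
      rw [hR, mem_image]
      exact ⟨⟨c, hc⟩, mem_attach _ _, rfl⟩
    rw [Crosses, filter_true_of_mem hall, card_compl, hTcard, Fintype.card_fin, hP]
    exact (min_eq_right (Nat.sub_le_sub_left hst.le n)).symm
  · -- cardinality bound
    set W : ℕ := (((univ : Finset (Fin n)).powersetCard t).filter
        (fun T => rainbow T)).card with hWdef
    have hsplit : 𝓣.card + W = n.choose t := by
      rw [hT, hWdef]
      have := Finset.card_filter_add_card_filter_not
        (s := (univ : Finset (Fin n)).powersetCard t) (p := fun T => rainbow T)
      rw [Finset.card_powersetCard, card_univ, Fintype.card_fin] at this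
      omega
    set D : Finset (Fin t → Fin n) :=
      Fintype.piFinset (fun i : Fin t => univ.filter (fun x : Fin n => res x = i.1)) with hD
    have hDres : ∀ g ∈ D, ∀ i : Fin t, res (g i) = i.1 := by
      intro g hg i
      exact (mem_filter.1 (Fintype.mem_piFinset.1 hg i)).2
    have hDinj : ∀ g ∈ D, Function.Injective g := by
      intro g hg i j hij
      have := hDres g hg
      have h1 : (i : ℕ) = j := by rw [← this i, ← this j, hij]
      exact Fin.ext h1
    have hmapsto : ∀ g ∈ D, Finset.image g univ ∈
        ((univ : Finset (Fin n)).powersetCard t).filter (fun T => rainbow T) := by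
      intro g hg
      rw [mem_filter, mem_powersetCard]
      refine ⟨⟨subset_univ _, ?_⟩, ?_⟩
      · rw [Finset.card_image_of_injective _ (hDinj g hg), card_univ, Fintype.card_fin]
      · intro x hx y hy hxy
        obtain ⟨i, -, rfl⟩ := mem_image.1 hx
        obtain ⟨j, -, rfl⟩ := mem_image.1 hy
        rw [hDres g hg i, hDres g hg j] at hxy
        rw [Fin.ext hxy]
    have hinjD : Set.InjOn (fun g => Finset.image g univ) (D : Set (Fin t → Fin n)) := by
      intro g hg g' hg' hgg'
      rw [Finset.mem_coe] at hg hg'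
      dsimp only at hgg'
      funext i
      have h1 : g i ∈ Finset.image g' univ := by
        rw [← hgg']
        exact mem_image_of_mem _ (mem_univ _)
      obtain ⟨j, -, hj⟩ := mem_image.1 h1
      have : (j : ℕ) = i := by rw [← hDres g' hg' j, hj, hDres g hg i]
      rw [← hj, Fin.ext this]
    have hDle : D.card ≤ W :=
      Finset.card_le_card_of_injOn _ hmapsto hinjD
    have hVi : ∀ i : Fin t, n / t ≤ (univ.filter (fun x : Fin n => res x = i.1)).card := by
      intro i
      have keylt : ∀ j : ℕ, j < n / t → j * t + i.1 < n := by
        intro j hj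
        have h2 : (j+1) * t ≤ (n/t) * t := Nat.mul_le_mul_right t hj
        have h3 : (n/t) * t ≤ n := Nat.div_mul_le_self n t
        have h4 := i.2
        nlinarith
      rw [← Finset.card_range (n/t)]
      apply Finset.card_le_card_of_injOn
        (fun j => (⟨(j * t + i.1) % n, Nat.mod_lt _ hn0⟩ : Fin n))
      · intro j hj
        have hj' := mem_range.1 hj
        have hlt := keylt j hj'
        rw [Finset.mem_coe, mem_filter]
        refine ⟨mem_univ _, ?_⟩
        show ((j * t + i.1) % n) % t = i.1
        rw [Nat.mod_eq_of_lt hlt, Nat.add_comm, Nat.add_mul_mod_self_right, Nat.mod_eq_of_lt i.2]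
      · intro j hj j' hj' hjj'
        have h1 := keylt j (mem_range.1 hj)
        have h2 := keylt j' (mem_range.1 hj')
        have : (j * t + i.1) % n = (j' * t + i.1) % n := congrArg Fin.val hjj'
        rw [Nat.mod_eq_of_lt h1, Nat.mod_eq_of_lt h2] at this
        have : j * t = j' * t := by omega
        exact Nat.eq_of_mul_eq_mul_right ht0 this
    have hDcard : (n / t) ^ t ≤ D.card := by
      rw [hD, Fintype.card_piFinset]
      calc (n/t)^t = ∏ _i : Fin t, (n/t) := by
            rw [Finset.prod_const, card_univ, Fintype.card_fin]
        _ ≤ _ := Finset.prod_le_prod (fun _ _ => Nat.zero_le _) (fun i _ => hVi i)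
    -- now the real-number computation
    have hWn : (n/t)^t ≤ W := le_trans hDcard hDle
    have hq1 : n ≤ 2 * t * (n / t) := by
      have h1 := Nat.div_add_mod n t
      have h2 : n % t < t := Nat.mod_lt _ ht0
      have h3 : 1 ≤ n / t := (Nat.one_le_div_iff ht0).2 (by omega)
      nlinarith
    have h2t : (0:ℝ) < 2 * t := by positivity
    have hqr : (n:ℝ) / (2*t) ≤ ((n/t : ℕ) : ℝ) := by
      rw [div_le_iff₀ h2t]
      calc (n:ℝ) ≤ ((2 * t * (n/t) : ℕ) : ℝ) := by exact_mod_cast hq1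
        _ = ((n/t : ℕ) : ℝ) * (2 * t) := by push_cast; ring
    have hcC : (n.choose t : ℝ) / (2*t)^t ≤ (W : ℝ) := by
      have h1 : (n.choose t : ℝ) ≤ (n:ℝ)^t := by exact_mod_cast Nat.choose_le_pow n t
      have h2 : (n:ℝ)^t / (2*t)^t = ((n:ℝ)/(2*t))^t := by rw [div_pow]
      have h3 : ((n:ℝ)/(2*t))^t ≤ ((n/t : ℕ) : ℝ)^t := by
        apply pow_le_pow_left₀ (by positivity) hqr
      have h4 : (((n/t : ℕ))^t : ℝ) ≤ (W : ℝ) := by exact_mod_cast hWn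
      calc (n.choose t : ℝ) / (2*t)^t ≤ (n:ℝ)^t / (2*t)^t := by gcongr
        _ = ((n:ℝ)/(2*t))^t := h2
        _ ≤ ((n/t : ℕ) : ℝ)^t := h3
        _ ≤ (W : ℝ) := by push_cast at h4 ⊢; exact h4
    have hWle : W ≤ n.choose t := by omega
    have h𝓣 : (𝓣.card : ℝ) = (n.choose t : ℝ) - (W : ℝ) := by
      have : 𝓣.card = n.choose t - W := by omega
      rw [this, Nat.cast_sub hWle]
    calc ((𝓣.image (fun T => Tᶜ)).card : ℝ) ≤ (𝓣.card : ℝ) := by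
          exact_mod_cast Finset.card_image_le
      _ = (n.choose t : ℝ) - (W : ℝ) := h𝓣
      _ ≤ (n.choose t : ℝ) - (n.choose t : ℝ) / (2*t)^t := by linarith
      _ = (1 - 1/(2*t:ℝ)^t) * (n.choose t : ℝ) := by ring

theorem stmt18 (s t : ℕ) (ht : 2 ≤ t) (hst : t < s) :
    ∃ c : ℝ, 0 < c ∧ ∀ᶠ n : ℕ in Filter.atTop,
      (f n (n - s) (n - t) : ℝ) ≤ (1 - c) * (n.choose t : ℝ) := by
  refine ⟨1/(2*t:ℝ)^t, by positivity, ?_⟩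
  rw [Filter.eventually_atTop]
  refine ⟨2*t + s + 1, fun n hn => ?_⟩
  obtain ⟨𝓗, h1, h2, h3⟩ := key s t n ht hst hn
  have hf : f n (n-s) (n-t) ≤ 𝓗.card := Nat.sInf_le ⟨𝓗, h1, h2, rfl⟩
  calc (f n (n-s) (n-t) : ℝ) ≤ (𝓗.card : ℝ) := by exact_mod_cast hf
    _ ≤ _ := h3
end
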